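/- arXiv:2111.05462 — 8 statements merged into one kernel-verified Lean document; each statement's English description precedes it below -/
import Mathlib

section
/- Cartan's first structure equation: for every p ∈ W, every v, w ∈ E, and every i ∈ {1,2,3}, the exterior derivative dθ^i_p(v,w) := D_p(q ↦ ⟪w, e_i(q)⟫)(v) − D_p(q ↦ ⟪v, e_i(q)⟫)(w) satisfies dθ^i_p(v,w) = −Σ_{k=1}^{3} ( ω^i_k|_p(v)·θ^k_p(w) − ω^i_k|_p(w)·θ^k_p(v) ). -/
/-- **Cartan's first structure equation** for a moving frame `e 0, e 1, e 2` on an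
open set `W ⊆ ℝ³`, with dual 1-forms `θ^i_p(v) = ⟪v, e i p⟫` and connection
1-forms `ω^i_k|_p(v) = ⟪(D(e k))_p(v), e i p⟫`:
`dθ^i = -∑ k, ω^i_k ∧ θ^k`. -/
theorem cartan_first_structure_equation
    (W : Set (EuclideanSpace ℝ (Fin 3))) (hW : IsOpen W)
    (e : Fin 3 → EuclideanSpace ℝ (Fin 3) → EuclideanSpace ℝ (Fin 3))
    (he : ∀ i, ContDiffOn ℝ (⊤ : ℕ∞) (e i) W)
    (horth : ∀ p ∈ W, Orthonormal ℝ (fun i : Fin 3 => e i p)) :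
    ∀ p ∈ W, ∀ v w : EuclideanSpace ℝ (Fin 3), ∀ i : Fin 3,
      fderiv ℝ (fun q => (inner ℝ w (e i q) : ℝ)) p v
        - fderiv ℝ (fun q => (inner ℝ v (e i q) : ℝ)) p w
      = - ∑ k : Fin 3,
          ((inner ℝ (fderiv ℝ (e k) p v) (e i p) : ℝ) * (inner ℝ w (e k p) : ℝ)
            - (inner ℝ (fderiv ℝ (e k) p w) (e i p) : ℝ) * (inner ℝ v (e k p) : ℝ)) := by
  intro p hp v w i
  have hmem : W ∈ nhds p := hW.mem_nhds hp
  have hdiff : ∀ k, DifferentiableAt ℝ (e k) p := fun k =>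
    (((he k).differentiableOn (by simp)).differentiableAt hmem)
  -- derivative of the dual 1-forms
  have hfd : ∀ (u : EuclideanSpace ℝ (Fin 3)) (x : EuclideanSpace ℝ (Fin 3)),
      fderiv ℝ (fun q => (inner ℝ u (e i q) : ℝ)) p x
        = inner ℝ u (fderiv ℝ (e i) p x) := by
    intro u x
    rw [fderiv_inner_apply ℝ (differentiableAt_const u) (hdiff i) x]
    simp
  -- antisymmetry of the connection forms
  have hanti : ∀ (k : Fin 3) (x : EuclideanSpace ℝ (Fin 3)),
      (inner ℝ (fderiv ℝ (e k) p x) (e i p) : ℝ)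
        = - inner ℝ (e k p) (fderiv ℝ (e i) p x) := by
    intro k x
    have hconst : (fun q => (inner ℝ (e k q) (e i q) : ℝ))
        =ᶠ[nhds p] fun _ => (if k = i then (1 : ℝ) else 0) := by
      filter_upwards [hmem] with q hq
      simpa using orthonormal_iff_ite.mp (horth q hq) k i
    have hz : fderiv ℝ (fun q => (inner ℝ (e k q) (e i q) : ℝ)) p x = 0 := by
      rw [hconst.fderiv_eq]; simp
    rw [fderiv_inner_apply ℝ (hdiff k) (hdiff i) x] at hz
    linarith
  -- orthonormal basis at p
  have hcard : Fintype.card (Fin 3)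
      = Module.finrank ℝ (EuclideanSpace ℝ (Fin 3)) := by
    simp [finrank_euclideanSpace_fin]
  have hspan : ⊤ ≤ Submodule.span ℝ (Set.range fun k : Fin 3 => e k p) := by
    have : Submodule.span ℝ (Set.range fun k : Fin 3 => e k p) = ⊤ := by
      rw [← coe_basisOfLinearIndependentOfCardEqFinrank
        (horth p hp).linearIndependent hcard]
      exact Module.Basis.span_eq _
    exact this.ge
  let b : OrthonormalBasis (Fin 3) ℝ (EuclideanSpace ℝ (Fin 3)) :=
    OrthonormalBasis.mk (horth p hp) hspan
  have hb : ∀ k, b k = e k p := fun k => by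
    simp [b, OrthonormalBasis.coe_mk]
  have expand : ∀ x y : EuclideanSpace ℝ (Fin 3),
      ∑ k : Fin 3, (inner ℝ x (e k p) : ℝ) * (inner ℝ (e k p) y : ℝ) = inner ℝ x y := by
    intro x y
    have := b.sum_inner_mul_inner x y
    simpa [hb] using this
  rw [hfd w v, hfd v w]
  have : - ∑ k : Fin 3,
          ((inner ℝ (fderiv ℝ (e k) p v) (e i p) : ℝ) * (inner ℝ w (e k p) : ℝ)
            - (inner ℝ (fderiv ℝ (e k) p w) (e i p) : ℝ) * (inner ℝ v (e k p) : ℝ))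
      = ∑ k : Fin 3,
          ((inner ℝ w (e k p) : ℝ) * inner ℝ (e k p) (fderiv ℝ (e i) p v)
            - (inner ℝ v (e k p) : ℝ) * inner ℝ (e k p) (fderiv ℝ (e i) p w)) := by
    rw [← Finset.sum_neg_distrib]
    refine Finset.sum_congr rfl fun k _ => ?_
    rw [hanti k v, hanti k w]; ring
  rw [this, Finset.sum_sub_distrib, expand, expand]
end

section
/- Cartan's second structure equation: for every p ∈ W, every v, w ∈ E, and all i, j ∈ {1,2,3}, the exterior derivative dω^i_j|_p(v,w) := D_p(q ↦ ⟪(De_j)_q(w), e_i(q)⟫)(v) − D_p(q ↦ ⟪(De_j)_q(v), e_i(q)⟫)(w) satisfies dω^i_j|_p(v,w) = −Σ_{k=1}^{3} ( ω^i_k|_p(v)·ω^k_j|_p(w) − ω^i_k|_p(w)·ω^k_j|_p(v) ). -/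
open scoped RealInnerProductSpace

/-- **Cartan's second structure equation** for a moving frame `e 0, e 1, e 2` on an
open set `W ⊆ ℝ³`, with connection 1-forms `ω^i_j|_p(v) = ⟪(D(e j))_p(v), e i p⟫`:
`dω^i_j = -∑ k, ω^i_k ∧ ω^k_j`. -/
theorem cartan_second_structure_equation
    (W : Set (EuclideanSpace ℝ (Fin 3))) (hW : IsOpen W)
    (e : Fin 3 → EuclideanSpace ℝ (Fin 3) → EuclideanSpace ℝ (Fin 3))
    (he : ∀ i, ContDiffOn ℝ (⊤ : ℕ∞) (e i) W)
    (horth : ∀ p ∈ W, Orthonormal ℝ (fun i : Fin 3 => e i p)) :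
    ∀ p ∈ W, ∀ v w : EuclideanSpace ℝ (Fin 3), ∀ i j : Fin 3,
      fderiv ℝ (fun q => (inner ℝ (fderiv ℝ (e j) q w) (e i q) : ℝ)) p v
        - fderiv ℝ (fun q => (inner ℝ (fderiv ℝ (e j) q v) (e i q) : ℝ)) p w
      = - ∑ k : Fin 3,
          ((inner ℝ (fderiv ℝ (e k) p v) (e i p) : ℝ)
              * (inner ℝ (fderiv ℝ (e j) p w) (e k p) : ℝ)
            - (inner ℝ (fderiv ℝ (e k) p w) (e i p) : ℝ)
              * (inner ℝ (fderiv ℝ (e j) p v) (e k p) : ℝ)) := by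
  intro p hp v w i j
  have hmem : W ∈ nhds p := hW.mem_nhds hp
  have hc : ∀ k, ContDiffAt ℝ (⊤ : ℕ∞) (e k) p := fun k => (he k).contDiffAt hmem
  have hdiff : ∀ k, DifferentiableAt ℝ (e k) p := fun k => (hc k).differentiableAt (by simp)
  have hg : ContDiffAt ℝ (⊤ : ℕ∞) (fderiv ℝ (e j)) p := (hc j).fderiv_right (by simp)
  have hGdiff : DifferentiableAt ℝ (fderiv ℝ (e j)) p := hg.differentiableAt (by simp)
  set G := fderiv ℝ (fderiv ℝ (e j)) p with hG
  have happ : ∀ u : EuclideanSpace ℝ (Fin 3), HasFDerivAt (fun q => fderiv ℝ (e j) q u)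
      ((ContinuousLinearMap.apply ℝ (EuclideanSpace ℝ (Fin 3)) u).comp G) p := fun u =>
    (ContinuousLinearMap.apply ℝ (EuclideanSpace ℝ (Fin 3)) u).hasFDerivAt.comp p
      hGdiff.hasFDerivAt
  -- derivative of the connection form
  have key : ∀ a b : EuclideanSpace ℝ (Fin 3),
      fderiv ℝ (fun q => (inner ℝ (fderiv ℝ (e j) q b) (e i q) : ℝ)) p a
        = ⟪fderiv ℝ (e j) p b, fderiv ℝ (e i) p a⟫ + ⟪G a b, e i p⟫ := by
    intro a b
    rw [fderiv_inner_apply ℝ (happ b).differentiableAt (hdiff i)]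
    congr 1
    rw [(happ b).fderiv]
    rfl
  have hsym : G v w = G w v := ((hc j).isSymmSndFDerivAt (by rw [minSmoothness_of_isRCLikeNormedField]; exact WithTop.coe_le_coe.mpr le_top)) v w
  -- orthonormal basis at p
  have hON := horth p hp
  have hsp : ⊤ ≤ Submodule.span ℝ (Set.range fun k : Fin 3 => e k p) :=
    le_of_eq (hON.linearIndependent.span_eq_top_of_card_eq_finrank (by simp)).symm
  set b : OrthonormalBasis (Fin 3) ℝ (EuclideanSpace ℝ (Fin 3)) :=
    OrthonormalBasis.mk hON hsp with hb
  have hbk : ∀ k, b k = e k p := fun k => by rw [hb, OrthonormalBasis.coe_mk]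
  have parseval : ∀ x y : EuclideanSpace ℝ (Fin 3),
      ⟪x, y⟫ = ∑ k : Fin 3, ⟪x, e k p⟫ * ⟪e k p, y⟫ := by
    intro x y
    rw [← b.sum_inner_mul_inner x y]
    exact Finset.sum_congr rfl fun k _ => by rw [hbk]
  -- antisymmetry of the connection forms
  have anti : ∀ (k : Fin 3) (a : EuclideanSpace ℝ (Fin 3)),
      ⟪e k p, fderiv ℝ (e i) p a⟫ = -⟪fderiv ℝ (e k) p a, e i p⟫ := by
    intro k a
    have hconst : (fun q => (⟪e k q, e i q⟫ : ℝ)) =ᶠ[nhds p]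
        (fun _ => if k = i then (1 : ℝ) else 0) := by
      filter_upwards [hmem] with q hq
      exact orthonormal_iff_ite.mp (horth q hq) k i
    have h0 : fderiv ℝ (fun q => (⟪e k q, e i q⟫ : ℝ)) p a = 0 := by
      rw [hconst.fderiv_eq, fderiv_fun_const]
      rfl
    rw [fderiv_inner_apply ℝ (hdiff k) (hdiff i)] at h0
    linarith
  rw [key v w, key w v, hsym]
  rw [parseval (fderiv ℝ (e j) p w) (fderiv ℝ (e i) p v),
      parseval (fderiv ℝ (e j) p v) (fderiv ℝ (e i) p w)]
  have hrw : ∀ a c : EuclideanSpace ℝ (Fin 3),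
      ∑ k : Fin 3, ⟪fderiv ℝ (e j) p c, e k p⟫ * ⟪e k p, fderiv ℝ (e i) p a⟫
      = ∑ k : Fin 3, -(⟪fderiv ℝ (e k) p a, e i p⟫ * ⟪fderiv ℝ (e j) p c, e k p⟫) := by
    intro a c
    refine Finset.sum_congr rfl fun k _ => ?_
    rw [anti k a]; ring
  rw [hrw v w, hrw w v]
  rw [add_sub_add_right_eq_sub, ← Finset.sum_sub_distrib, ← Finset.sum_neg_distrib]
  exact Finset.sum_congr rfl fun k _ => by ring
end

section
/- For every q ∈ U and every v ∈ ℝ², (κ₁(q) − κ₂(q))·ω_q(v) = (Dκ₁)_q(f₂(q))·θ¹_q(v) + (Dκ₂)_q(f₁(q))·θ²_q(v); that is, (κ₁ − κ₂)·ω₁² = dκ₁(e₂)·θ¹ + dκ₂(e₁)·θ² as 1-forms on U. -/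
open scoped RealInnerProductSpace

section helpers
variable {F : Type*} [NormedAddCommGroup F] [NormedSpace ℝ F]
    {U : Set (EuclideanSpace ℝ (Fin 2))}
    {f : EuclideanSpace ℝ (Fin 2) → F} {q : EuclideanSpace ℝ (Fin 2)}

private lemma cfepc_diff_fderiv (hU : IsOpen U) (hf : ContDiffOn ℝ (⊤ : ℕ∞) f U) (hq : q ∈ U) :
    DifferentiableAt ℝ (fderiv ℝ f) q := by
  have h1 : ContDiffOn ℝ 1 (fderiv ℝ f) U := hf.fderiv_of_isOpen hU (WithTop.coe_le_coe.mpr le_top)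
  exact (h1.contDiffAt (hU.mem_nhds hq)).differentiableAt one_ne_zero

private lemma cfepc_fderiv_apply_eq (hU : IsOpen U) (hf : ContDiffOn ℝ (⊤ : ℕ∞) f U) (hq : q ∈ U)
    (v w : EuclideanSpace ℝ (Fin 2)) :
    fderiv ℝ (fun p => fderiv ℝ f p w) q v = fderiv ℝ (fderiv ℝ f) q v w := by
  have hD := cfepc_diff_fderiv hU hf hq
  have := ((ContinuousLinearMap.apply ℝ F w).hasFDerivAt.comp q hD.hasFDerivAt).fderiv
  have h2 : (fun p => fderiv ℝ f p w)
      = (ContinuousLinearMap.apply ℝ F w) ∘ (fderiv ℝ f) := rfl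
  rw [h2, this]; rfl

private lemma cfepc_diff_fderiv_apply (hU : IsOpen U) (hf : ContDiffOn ℝ (⊤ : ℕ∞) f U) (hq : q ∈ U)
    (w : EuclideanSpace ℝ (Fin 2)) :
    DifferentiableAt ℝ (fun p => fderiv ℝ f p w) q :=
  (ContinuousLinearMap.apply ℝ F w).differentiable.differentiableAt.comp q
    (cfepc_diff_fderiv hU hf hq)

private lemma cfepc_symm (hU : IsOpen U) (hf : ContDiffOn ℝ (⊤ : ℕ∞) f U) (hq : q ∈ U)
    (v w : EuclideanSpace ℝ (Fin 2)) :
    fderiv ℝ (fun p => fderiv ℝ f p w) q v = fderiv ℝ (fun p => fderiv ℝ f p v) q w := by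
  rw [cfepc_fderiv_apply_eq hU hf hq, cfepc_fderiv_apply_eq hU hf hq]
  have hev : ∀ᶠ p in nhds q, HasFDerivAt f (fderiv ℝ f p) p := by
    filter_upwards [hU.mem_nhds hq] with p hp
    exact (((hf.contDiffAt (hU.mem_nhds hp)).differentiableAt (by simp)).hasFDerivAt)
  exact second_derivative_symmetric_of_eventually hev (cfepc_diff_fderiv hU hf hq).hasFDerivAt v w

end helpers

private lemma cfepc_span (a b c x : EuclideanSpace ℝ (Fin 3))
    (h : Orthonormal ℝ ![a, b, c]) (hx : ⟪x, c⟫ = 0) :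
    x = ⟪x, a⟫ • a + ⟪x, b⟫ • b := by
  have hcard : Fintype.card (Fin 3) = Module.finrank ℝ (EuclideanSpace ℝ (Fin 3)) := by
    simp [finrank_euclideanSpace]
  let B : OrthonormalBasis (Fin 3) ℝ (EuclideanSpace ℝ (Fin 3)) :=
    OrthonormalBasis.mk h ((h.linearIndependent.span_eq_top_of_card_eq_finrank hcard).ge)
  have hB : ∀ i, B i = ![a, b, c] i := fun i => by simp [B]
  have := B.sum_repr' x
  rw [Fin.sum_univ_three, hB 0, hB 1, hB 2] at this
  simp only [Matrix.cons_val_zero, Matrix.cons_val_one, Matrix.head_cons,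
    Matrix.cons_val_two, Matrix.tail_cons] at this
  rw [real_inner_comm x a, real_inner_comm x b, real_inner_comm x c, hx] at this
  simp only [zero_smul, add_zero] at this
  exact this.symm

/-- For an immersed surface `X : U → ℝ³` with adapted orthonormal frame
`e₁, e₂, e₃` (where `e₁, e₂` are tangent principal directions with principal
curvatures `κ₁, κ₂` and `e₃` is normal), the connection form
`ω₁²_q(v) = ⟪(De₁)_q(v), e₂(q)⟫` satisfies
`(κ₁ - κ₂)·ω₁² = dκ₁(e₂)·θ¹ + dκ₂(e₁)·θ²`. -/
theorem connection_form_eq_principal_curvatures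
    (U : Set (EuclideanSpace ℝ (Fin 2))) (hU : IsOpen U)
    (X : EuclideanSpace ℝ (Fin 2) → EuclideanSpace ℝ (Fin 3))
    (hX : ContDiffOn ℝ (⊤ : ℕ∞) X U)
    (hXimm : ∀ q ∈ U, Function.Injective (fderiv ℝ X q))
    (e₁ e₂ e₃ : EuclideanSpace ℝ (Fin 2) → EuclideanSpace ℝ (Fin 3))
    (he₁ : ContDiffOn ℝ (⊤ : ℕ∞) e₁ U) (he₂ : ContDiffOn ℝ (⊤ : ℕ∞) e₂ U) (he₃ : ContDiffOn ℝ (⊤ : ℕ∞) e₃ U)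
    (horth : ∀ q ∈ U, Orthonormal ℝ ![e₁ q, e₂ q, e₃ q])
    (htan : ∀ q ∈ U, ∀ v : EuclideanSpace ℝ (Fin 2),
      (inner ℝ (fderiv ℝ X q v) (e₃ q) : ℝ) = 0)
    (f₁ f₂ : EuclideanSpace ℝ (Fin 2) → EuclideanSpace ℝ (Fin 2))
    (hf₁ : ContDiffOn ℝ (⊤ : ℕ∞) f₁ U) (hf₂ : ContDiffOn ℝ (⊤ : ℕ∞) f₂ U)
    (hfe₁ : ∀ q ∈ U, fderiv ℝ X q (f₁ q) = e₁ q)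
    (hfe₂ : ∀ q ∈ U, fderiv ℝ X q (f₂ q) = e₂ q)
    (κ₁ κ₂ : EuclideanSpace ℝ (Fin 2) → ℝ)
    (hκ₁ : ContDiffOn ℝ (⊤ : ℕ∞) κ₁ U) (hκ₂ : ContDiffOn ℝ (⊤ : ℕ∞) κ₂ U)
    (hprin : ∀ q ∈ U, ∀ v : EuclideanSpace ℝ (Fin 2),
      fderiv ℝ e₃ q v
        = (-(κ₁ q * (inner ℝ (fderiv ℝ X q v) (e₁ q) : ℝ))) • e₁ q
          + (-(κ₂ q * (inner ℝ (fderiv ℝ X q v) (e₂ q) : ℝ))) • e₂ q) :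
    ∀ q ∈ U, ∀ v : EuclideanSpace ℝ (Fin 2),
      (κ₁ q - κ₂ q) * (inner ℝ (fderiv ℝ e₁ q v) (e₂ q) : ℝ)
        = fderiv ℝ κ₁ q (f₂ q) * (inner ℝ (fderiv ℝ X q v) (e₁ q) : ℝ)
          + fderiv ℝ κ₂ q (f₁ q) * (inner ℝ (fderiv ℝ X q v) (e₂ q) : ℝ) := by
  intro q hq v₀
  have memU : U ∈ nhds q := hU.mem_nhds hq
  -- differentiability at q
  have hde₁ : DifferentiableAt ℝ e₁ q := (he₁.contDiffAt memU).differentiableAt (by simp)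
  have hde₂ : DifferentiableAt ℝ e₂ q := (he₂.contDiffAt memU).differentiableAt (by simp)
  have hdκ₁ : DifferentiableAt ℝ κ₁ q := (hκ₁.contDiffAt memU).differentiableAt (by simp)
  have hdκ₂ : DifferentiableAt ℝ κ₂ q := (hκ₂.contDiffAt memU).differentiableAt (by simp)
  have hdDX : ∀ w, DifferentiableAt ℝ (fun p => fderiv ℝ X p w) q :=
    fun w => cfepc_diff_fderiv_apply hU hX hq w
  -- shorthand
  set ω : EuclideanSpace ℝ (Fin 2) → ℝ := fun u => ⟪fderiv ℝ e₁ q u, e₂ q⟫ with hω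
  set I₁ : EuclideanSpace ℝ (Fin 2) → ℝ := fun u => ⟪fderiv ℝ X q u, e₁ q⟫ with hI₁
  set I₂ : EuclideanSpace ℝ (Fin 2) → ℝ := fun u => ⟪fderiv ℝ X q u, e₂ q⟫ with hI₂
  set S : EuclideanSpace ℝ (Fin 2) → EuclideanSpace ℝ (Fin 2) → EuclideanSpace ℝ (Fin 3) :=
    fun v w => fderiv ℝ (fun p => fderiv ℝ X p w) q v with hS
  -- orthonormality at q
  have ho := orthonormal_iff_ite.mp (horth q hq)
  have n11 : ⟪e₁ q, e₁ q⟫ = 1 := by simpa using ho 0 0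
  have n22 : ⟪e₂ q, e₂ q⟫ = 1 := by simpa using ho 1 1
  have n12 : ⟪e₁ q, e₂ q⟫ = 0 := by simpa using ho 0 1
  -- differentiated orthonormality at q
  have hdio : ∀ (a b : EuclideanSpace ℝ (Fin 2) → EuclideanSpace ℝ (Fin 3)),
      DifferentiableAt ℝ a q → DifferentiableAt ℝ b q → ∀ (c : ℝ),
      (∀ p ∈ U, (⟪a p, b p⟫ : ℝ) = c) → ∀ u,
      (⟪a q, fderiv ℝ b q u⟫ : ℝ) + ⟪fderiv ℝ a q u, b q⟫ = 0 := by
    intro a b da db c hc u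
    have hev : (fun p => (⟪a p, b p⟫ : ℝ)) =ᶠ[nhds q] fun _ => c :=
      Filter.eventuallyEq_of_mem memU hc
    have h0 : fderiv ℝ (fun p => (⟪a p, b p⟫ : ℝ)) q = 0 := by
      rw [hev.fderiv_eq]; exact fderiv_const_apply c
    have h1 := fderiv_inner_apply ℝ da db u
    rw [h0] at h1
    simpa using h1.symm
  have d11 : ∀ u, (⟪e₁ q, fderiv ℝ e₁ q u⟫ : ℝ) = 0 := by
    intro u
    have := hdio e₁ e₁ hde₁ hde₁ 1
      (fun p hp => by simpa using orthonormal_iff_ite.mp (horth p hp) 0 0) u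
    linarith [real_inner_comm (e₁ q) (fderiv ℝ e₁ q u)]
  have d22 : ∀ u, (⟪e₂ q, fderiv ℝ e₂ q u⟫ : ℝ) = 0 := by
    intro u
    have := hdio e₂ e₂ hde₂ hde₂ 1
      (fun p hp => by simpa using orthonormal_iff_ite.mp (horth p hp) 1 1) u
    linarith [real_inner_comm (e₂ q) (fderiv ℝ e₂ q u)]
  have d12 : ∀ u, (⟪e₁ q, fderiv ℝ e₂ q u⟫ : ℝ) = -(ω u) := by
    intro u
    have := hdio e₁ e₂ hde₁ hde₂ 0
      (fun p hp => by simpa using orthonormal_iff_ite.mp (horth p hp) 0 1) u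
    have : ω u = ⟪fderiv ℝ e₁ q u, e₂ q⟫ := rfl
    linarith
  -- tangential span of DX
  have hDXspan : ∀ u, fderiv ℝ X q u = I₁ u • e₁ q + I₂ u • e₂ q :=
    fun u => cfepc_span _ _ _ _ (horth q hq) (htan q hq u)
  -- key second-derivative formula
  have key : ∀ w v, fderiv ℝ (fun p => fderiv ℝ e₃ p w) q v
      = (-(fderiv ℝ κ₁ q v * I₁ w
            + κ₁ q * ((⟪fderiv ℝ X q w, fderiv ℝ e₁ q v⟫ : ℝ) + ⟪S v w, e₁ q⟫))) • e₁ q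
        + (-(κ₁ q * I₁ w)) • fderiv ℝ e₁ q v
        + ((-(fderiv ℝ κ₂ q v * I₂ w
            + κ₂ q * ((⟪fderiv ℝ X q w, fderiv ℝ e₂ q v⟫ : ℝ) + ⟪S v w, e₂ q⟫))) • e₂ q
        + (-(κ₂ q * I₂ w)) • fderiv ℝ e₂ q v) := by
    intro w v
    have hI1d : DifferentiableAt ℝ (fun p => (⟪fderiv ℝ X p w, e₁ p⟫ : ℝ)) q :=
      (hdDX w).inner ℝ hde₁
    have hI2d : DifferentiableAt ℝ (fun p => (⟪fderiv ℝ X p w, e₂ p⟫ : ℝ)) q :=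
      (hdDX w).inner ℝ hde₂
    have ha : DifferentiableAt ℝ (fun p => -(κ₁ p * (⟪fderiv ℝ X p w, e₁ p⟫ : ℝ))) q :=
      (hdκ₁.mul hI1d).neg
    have hb : DifferentiableAt ℝ (fun p => -(κ₂ p * (⟪fderiv ℝ X p w, e₂ p⟫ : ℝ))) q :=
      (hdκ₂.mul hI2d).neg
    have hev : (fun p => fderiv ℝ e₃ p w) =ᶠ[nhds q]
        (fun p => (-(κ₁ p * (⟪fderiv ℝ X p w, e₁ p⟫ : ℝ))) • e₁ p
          + (-(κ₂ p * (⟪fderiv ℝ X p w, e₂ p⟫ : ℝ))) • e₂ p) :=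
      Filter.eventuallyEq_of_mem memU (fun p hp => hprin p hp w)
    rw [hev.fderiv_eq]
    rw [fderiv_fun_add (ha.fun_smul hde₁) (hb.fun_smul hde₂), ContinuousLinearMap.add_apply,
      fderiv_fun_smul ha hde₁, fderiv_fun_smul hb hde₂]
    simp only [ContinuousLinearMap.add_apply, ContinuousLinearMap.smul_apply,
      ContinuousLinearMap.smulRight_apply]
    rw [fderiv_fun_neg, fderiv_fun_neg, ContinuousLinearMap.neg_apply, ContinuousLinearMap.neg_apply,
      fderiv_fun_mul hdκ₁ hI1d, fderiv_fun_mul hdκ₂ hI2d]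
    simp only [ContinuousLinearMap.add_apply, ContinuousLinearMap.smul_apply, smul_eq_mul]
    rw [fderiv_inner_apply ℝ (hdDX w) hde₁ v, fderiv_inner_apply ℝ (hdDX w) hde₂ v]
    simp only [hI₁, hI₂, hS]
    module
  -- inner helper rewrites
  have hωv : ∀ u, (⟪fderiv ℝ e₁ q u, e₂ q⟫ : ℝ) = ω u := fun u => rfl
  have d22' : ∀ u, (⟪fderiv ℝ e₂ q u, e₂ q⟫ : ℝ) = 0 := fun u => by
    rw [real_inner_comm]; exact d22 u
  have d11' : ∀ u, (⟪fderiv ℝ e₁ q u, e₁ q⟫ : ℝ) = 0 := fun u => by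
    rw [real_inner_comm]; exact d11 u
  have d12' : ∀ u, (⟪fderiv ℝ e₂ q u, e₁ q⟫ : ℝ) = -(ω u) := fun u => by
    rw [real_inner_comm]; exact d12 u
  have n21 : (⟪e₂ q, e₁ q⟫ : ℝ) = 0 := by rw [real_inner_comm]; exact n12
  have hexp₂ : ∀ v w, (⟪fderiv ℝ X q w, fderiv ℝ e₂ q v⟫ : ℝ) = I₁ w * (-(ω v)) := by
    intro v w
    rw [hDXspan w, inner_add_left, real_inner_smul_left, real_inner_smul_left, d12 v, d22 v]
    ring
  have hexp₁ : ∀ v w, (⟪fderiv ℝ X q w, fderiv ℝ e₁ q v⟫ : ℝ) = I₂ w * ω v := by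
    intro v w
    have d21 : (⟪e₂ q, fderiv ℝ e₁ q v⟫ : ℝ) = ω v := real_inner_comm _ _
    rw [hDXspan w, inner_add_left, real_inner_smul_left, real_inner_smul_left, d11 v, d21]
    ring
  -- scalar formulas
  have hT₂ : ∀ v w, (⟪fderiv ℝ (fun p => fderiv ℝ e₃ p w) q v, e₂ q⟫ : ℝ)
      = -(fderiv ℝ κ₂ q v * I₂ w) - κ₂ q * ⟪S v w, e₂ q⟫
        + (κ₂ q - κ₁ q) * (I₁ w * ω v) := by
    intro v w
    rw [key w v]
    simp only [inner_add_left, real_inner_smul_left]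
    rw [hexp₂ v w, n12, n22, d22' v, hωv v]
    ring
  have hT₁ : ∀ v w, (⟪fderiv ℝ (fun p => fderiv ℝ e₃ p w) q v, e₁ q⟫ : ℝ)
      = -(fderiv ℝ κ₁ q v * I₁ w) - κ₁ q * ⟪S v w, e₁ q⟫
        + (κ₂ q - κ₁ q) * (I₂ w * ω v) := by
    intro v w
    rw [key w v]
    simp only [inner_add_left, real_inner_smul_left]
    rw [hexp₁ v w, n11, n21, d11' v, d12' v]
    ring
  -- symmetry of S
  have hSsymm : ∀ v w, S v w = S w v := fun v w => cfepc_symm hU hX hq v w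
  -- Codazzi identities
  have E₂ : ∀ v w, (κ₁ q - κ₂ q) * (I₁ w * ω v - I₁ v * ω w)
      = fderiv ℝ κ₂ q w * I₂ v - fderiv ℝ κ₂ q v * I₂ w := by
    intro v w
    have hs := congrArg (fun z => (⟪z, e₂ q⟫ : ℝ)) (cfepc_symm hU he₃ hq v w)
    rw [hT₂ v w, hT₂ w v, hSsymm w v] at hs
    linear_combination -hs
  have E₁ : ∀ v w, (κ₁ q - κ₂ q) * (I₂ w * ω v - I₂ v * ω w)
      = fderiv ℝ κ₁ q w * I₁ v - fderiv ℝ κ₁ q v * I₁ w := by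
    intro v w
    have hs := congrArg (fun z => (⟪z, e₁ q⟫ : ℝ)) (cfepc_symm hU he₃ hq v w)
    rw [hT₁ v w, hT₁ w v, hSsymm w v] at hs
    linear_combination -hs
  -- evaluate the frame coefficients
  have A11 : I₁ (f₁ q) = 1 := by rw [hI₁]; simp only; rw [hfe₁ q hq, n11]
  have A21 : I₂ (f₁ q) = 0 := by rw [hI₂]; simp only; rw [hfe₁ q hq, n12]
  have A12 : I₁ (f₂ q) = 0 := by rw [hI₁]; simp only; rw [hfe₂ q hq, n21]
  have A22 : I₂ (f₂ q) = 1 := by rw [hI₂]; simp only; rw [hfe₂ q hq, n22]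
  have h1 := E₁ (f₁ q) (f₂ q)
  rw [A22, A21, A11, A12] at h1
  -- h1 : (κ₁ q - κ₂ q) * (1 * ω (f₁ q) - 0 * ω (f₂ q)) = dκ₁(f₂) * 1 - dκ₁(f₁) * 0
  have h2 := E₂ v₀ (f₁ q)
  rw [A11, A21] at h2
  show (κ₁ q - κ₂ q) * ω v₀ = fderiv ℝ κ₁ q (f₂ q) * I₁ v₀ + fderiv ℝ κ₂ q (f₁ q) * I₂ v₀
  linear_combination h2 + I₁ v₀ * h1
end

section
/- Assume additionally that κ₁(q) > 0 and κ₁(q)·κ₂(q) = −1 for all q ∈ U (constant Gaussian curvature −1), and set α(q) := arctan(κ₁(q)), so α(q) ∈ (0, π/2). Then for every q ∈ U and every v ∈ ℝ², ω_q(v) = tan(α(q))·(Dα)_q(f₂(q))·θ¹_q(v) + cot(α(q))·(Dα)_q(f₁(q))·θ²_q(v); that is, ω₁² = tan α · dα(e₂)·θ¹ + cot α · dα(e₁)·θ² as 1-forms on U. -/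
/-- With the additional hypotheses `κ₁ > 0` and `κ₁·κ₂ = -1` (constant Gaussian
curvature `-1`), setting `α = arctan κ₁` so `α ∈ (0, π/2)`, the connection form
satisfies `ω₁² = tan α · dα(e₂)·θ¹ + cot α · dα(e₁)·θ²`. -/
theorem connection_form_eq_asymptotic_angle
    (U : Set (EuclideanSpace ℝ (Fin 2))) (hU : IsOpen U)
    (X : EuclideanSpace ℝ (Fin 2) → EuclideanSpace ℝ (Fin 3))
    (hX : ContDiffOn ℝ (⊤ : ℕ∞) X U)
    (hXimm : ∀ q ∈ U, Function.Injective (fderiv ℝ X q))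
    (e₁ e₂ e₃ : EuclideanSpace ℝ (Fin 2) → EuclideanSpace ℝ (Fin 3))
    (he₁ : ContDiffOn ℝ (⊤ : ℕ∞) e₁ U) (he₂ : ContDiffOn ℝ (⊤ : ℕ∞) e₂ U) (he₃ : ContDiffOn ℝ (⊤ : ℕ∞) e₃ U)
    (horth : ∀ q ∈ U, Orthonormal ℝ ![e₁ q, e₂ q, e₃ q])
    (htan : ∀ q ∈ U, ∀ v : EuclideanSpace ℝ (Fin 2),
      (inner ℝ (fderiv ℝ X q v) (e₃ q) : ℝ) = 0)
    (f₁ f₂ : EuclideanSpace ℝ (Fin 2) → EuclideanSpace ℝ (Fin 2))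
    (hf₁ : ContDiffOn ℝ (⊤ : ℕ∞) f₁ U) (hf₂ : ContDiffOn ℝ (⊤ : ℕ∞) f₂ U)
    (hfe₁ : ∀ q ∈ U, fderiv ℝ X q (f₁ q) = e₁ q)
    (hfe₂ : ∀ q ∈ U, fderiv ℝ X q (f₂ q) = e₂ q)
    (κ₁ κ₂ : EuclideanSpace ℝ (Fin 2) → ℝ)
    (hκ₁ : ContDiffOn ℝ (⊤ : ℕ∞) κ₁ U) (hκ₂ : ContDiffOn ℝ (⊤ : ℕ∞) κ₂ U)
    (hprin : ∀ q ∈ U, ∀ v : EuclideanSpace ℝ (Fin 2),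
      fderiv ℝ e₃ q v
        = (-(κ₁ q * (inner ℝ (fderiv ℝ X q v) (e₁ q) : ℝ))) • e₁ q
          + (-(κ₂ q * (inner ℝ (fderiv ℝ X q v) (e₂ q) : ℝ))) • e₂ q)
    (hκ₁pos : ∀ q ∈ U, 0 < κ₁ q)
    (hK : ∀ q ∈ U, κ₁ q * κ₂ q = -1)
    (α : EuclideanSpace ℝ (Fin 2) → ℝ)
    (hα : ∀ q, α q = Real.arctan (κ₁ q)) :
    ∀ q ∈ U, ∀ v : EuclideanSpace ℝ (Fin 2),
      (inner ℝ (fderiv ℝ e₁ q v) (e₂ q) : ℝ)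
        = Real.tan (α q) * fderiv ℝ α q (f₂ q) * (inner ℝ (fderiv ℝ X q v) (e₁ q) : ℝ)
          + Real.cot (α q) * fderiv ℝ α q (f₁ q) * (inner ℝ (fderiv ℝ X q v) (e₂ q) : ℝ) := by
  intro q hq v
  have hmem : ∀ p ∈ U, U ∈ nhds p := fun p hp => hU.mem_nhds hp
  -- differentiability facts
  have hde₁ : ∀ p ∈ U, DifferentiableAt ℝ e₁ p :=
    fun p hp => (he₁.contDiffAt (hmem p hp)).differentiableAt (by simp)
  have hde₂ : ∀ p ∈ U, DifferentiableAt ℝ e₂ p :=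
    fun p hp => (he₂.contDiffAt (hmem p hp)).differentiableAt (by simp)
  have hde₃ : ∀ p ∈ U, DifferentiableAt ℝ e₃ p :=
    fun p hp => (he₃.contDiffAt (hmem p hp)).differentiableAt (by simp)
  have hdκ₁ : ∀ p ∈ U, DifferentiableAt ℝ κ₁ p :=
    fun p hp => (hκ₁.contDiffAt (hmem p hp)).differentiableAt (by simp)
  have hdκ₂ : ∀ p ∈ U, DifferentiableAt ℝ κ₂ p :=
    fun p hp => (hκ₂.contDiffAt (hmem p hp)).differentiableAt (by simp)
  have hdDX : ∀ p ∈ U, DifferentiableAt ℝ (fderiv ℝ X) p :=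
    fun p hp => ((hX.contDiffAt (hmem p hp)).fderiv_right (m := 1) (WithTop.coe_le_coe.mpr le_top)).differentiableAt one_ne_zero
  have hdDe₃ : ∀ p ∈ U, DifferentiableAt ℝ (fderiv ℝ e₃) p :=
    fun p hp => ((he₃.contDiffAt (hmem p hp)).fderiv_right (m := 1) (WithTop.coe_le_coe.mpr le_top)).differentiableAt one_ne_zero
  have hdXu : ∀ (u : EuclideanSpace ℝ (Fin 2)), ∀ p ∈ U,
      DifferentiableAt ℝ (fun p => fderiv ℝ X p u) p :=
    fun u p hp => (hdDX p hp).clm_apply (differentiableAt_const u)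
  -- orthonormality values
  have hon : ∀ p ∈ U, ∀ i j : Fin 3,
      (inner ℝ (![e₁ p, e₂ p, e₃ p] i) (![e₁ p, e₂ p, e₃ p] j) : ℝ) = if i = j then 1 else 0 :=
    fun p hp => orthonormal_iff_ite.mp (horth p hp)
  have h11 : ∀ p ∈ U, (inner ℝ (e₁ p) (e₁ p) : ℝ) = 1 := fun p hp => by simpa using hon p hp 0 0
  have h22 : ∀ p ∈ U, (inner ℝ (e₂ p) (e₂ p) : ℝ) = 1 := fun p hp => by simpa using hon p hp 1 1
  have h12 : ∀ p ∈ U, (inner ℝ (e₁ p) (e₂ p) : ℝ) = 0 := fun p hp => by simpa using hon p hp 0 1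
  have h21 : ∀ p ∈ U, (inner ℝ (e₂ p) (e₁ p) : ℝ) = 0 := fun p hp => by simpa using hon p hp 1 0
  -- skew-symmetry of frame derivatives at q
  have hskew : ∀ (a b : EuclideanSpace ℝ (Fin 2) → EuclideanSpace ℝ (Fin 3)) (c : ℝ),
      (∀ p ∈ U, DifferentiableAt ℝ a p) → (∀ p ∈ U, DifferentiableAt ℝ b p) →
      (∀ p ∈ U, (inner ℝ (a p) (b p) : ℝ) = c) →
      ∀ w, (inner ℝ (a q) (fderiv ℝ b q w) : ℝ) + (inner ℝ (fderiv ℝ a q w) (b q) : ℝ) = 0 := by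
    intro a b c ha hb hc w
    have h1 : (fun p => (inner ℝ (a p) (b p) : ℝ)) =ᶠ[nhds q] (fun _ => c) :=
      Filter.eventually_of_mem (hmem q hq) hc
    have h2 : fderiv ℝ (fun p => (inner ℝ (a p) (b p) : ℝ)) q = 0 := by
      rw [h1.fderiv_eq]; simp
    have h3 := fderiv_inner_apply (𝕜 := ℝ) (ha q hq) (hb q hq) w
    rw [h2] at h3
    simpa using h3.symm
  have s11 : ∀ w, (inner ℝ (e₁ q) (fderiv ℝ e₁ q w) : ℝ) = 0 := by
    intro w
    have h := hskew e₁ e₁ 1 hde₁ hde₁ h11 w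
    have h2 : (inner ℝ (fderiv ℝ e₁ q w) (e₁ q) : ℝ) = (inner ℝ (e₁ q) (fderiv ℝ e₁ q w) : ℝ) :=
      real_inner_comm _ _
    linarith
  have s22 : ∀ w, (inner ℝ (e₂ q) (fderiv ℝ e₂ q w) : ℝ) = 0 := by
    intro w
    have h := hskew e₂ e₂ 1 hde₂ hde₂ h22 w
    have h2 : (inner ℝ (fderiv ℝ e₂ q w) (e₂ q) : ℝ) = (inner ℝ (e₂ q) (fderiv ℝ e₂ q w) : ℝ) :=
      real_inner_comm _ _
    linarith
  have s12 : ∀ w, (inner ℝ (e₁ q) (fderiv ℝ e₂ q w) : ℝ)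
      = -(inner ℝ (fderiv ℝ e₁ q w) (e₂ q) : ℝ) := by
    intro w
    have h := hskew e₁ e₂ 0 hde₁ hde₂ h12 w
    linarith
  have s21 : ∀ w, (inner ℝ (e₂ q) (fderiv ℝ e₁ q w) : ℝ)
      = (inner ℝ (fderiv ℝ e₁ q w) (e₂ q) : ℝ) := fun w => real_inner_comm _ _
  -- orthonormal basis expansion at q
  have hbexp : ∀ y : EuclideanSpace ℝ (Fin 3),
      y = (inner ℝ (e₁ q) y : ℝ) • e₁ q + (inner ℝ (e₂ q) y : ℝ) • e₂ q
          + (inner ℝ (e₃ q) y : ℝ) • e₃ q := by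
    intro y
    have hcard : Fintype.card (Fin 3) = Module.finrank ℝ (EuclideanSpace ℝ (Fin 3)) := by
      simp [finrank_euclideanSpace]
    let b := basisOfOrthonormalOfCardEqFinrank (horth q hq) hcard
    have hb : ⇑b = ![e₁ q, e₂ q, e₃ q] := coe_basisOfOrthonormalOfCardEqFinrank _ _
    have hob : Orthonormal ℝ ⇑b := by rw [hb]; exact horth q hq
    have h := (b.toOrthonormalBasis hob).sum_repr' y
    rw [show ⇑(b.toOrthonormalBasis hob) = ![e₁ q, e₂ q, e₃ q] by
      rw [Module.Basis.coe_toOrthonormalBasis, hb]] at h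
    rw [Fin.sum_univ_three] at h
    simpa using h.symm
  -- e₃ ⟂ image of DX at q
  have hT3 : ∀ u, (inner ℝ (e₃ q) (fderiv ℝ X q u) : ℝ) = 0 :=
    fun u => by rw [real_inner_comm]; exact htan q hq u
  -- expansion of ⟪DX u, y⟫
  have hDXinner : ∀ (u : EuclideanSpace ℝ (Fin 2)) (y : EuclideanSpace ℝ (Fin 3)),
      (inner ℝ (fderiv ℝ X q u) y : ℝ)
        = (inner ℝ (fderiv ℝ X q u) (e₁ q) : ℝ) * (inner ℝ (e₁ q) y : ℝ)
          + (inner ℝ (fderiv ℝ X q u) (e₂ q) : ℝ) * (inner ℝ (e₂ q) y : ℝ) := by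
    intro u y
    have h := hbexp (fderiv ℝ X q u)
    rw [hT3 u] at h
    conv_lhs => rw [h]
    rw [zero_smul]
    simp only [inner_add_left, real_inner_smul_left, inner_zero_left, add_zero]
    rw [real_inner_comm (fderiv ℝ X q u) (e₁ q), real_inner_comm (fderiv ℝ X q u) (e₂ q)]
  -- second derivative evaluation
  have hev : ∀ (F : EuclideanSpace ℝ (Fin 2) → EuclideanSpace ℝ (Fin 3)),
      DifferentiableAt ℝ (fderiv ℝ F) q → ∀ (u w : EuclideanSpace ℝ (Fin 2)),
      fderiv ℝ (fun p => fderiv ℝ F p u) q w = fderiv ℝ (fderiv ℝ F) q w u := by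
    intro F hF u w
    have h := fderiv_clm_apply hF (differentiableAt_const u)
    rw [show (fun p => fderiv ℝ F p u) = (fun p => (fderiv ℝ F p) ((fun _ => u) p)) from rfl, h]
    simp
  have hsymX : ∀ u w, fderiv ℝ (fderiv ℝ X) q u w = fderiv ℝ (fderiv ℝ X) q w u :=
    fun u w => (hX.contDiffAt (hmem q hq)).isSymmSndFDerivAt (by rw [minSmoothness_of_isRCLikeNormedField]; exact WithTop.coe_le_coe.mpr le_top) u w
  have hsyme₃ : ∀ u w, fderiv ℝ (fderiv ℝ e₃) q u w = fderiv ℝ (fderiv ℝ e₃) q w u :=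
    fun u w => (he₃.contDiffAt (hmem q hq)).isSymmSndFDerivAt (by rw [minSmoothness_of_isRCLikeNormedField]; exact WithTop.coe_le_coe.mpr le_top) u w
  -- derivative of θ-type coefficients
  have hdT : ∀ (e : EuclideanSpace ℝ (Fin 2) → EuclideanSpace ℝ (Fin 3)),
      (∀ p ∈ U, DifferentiableAt ℝ e p) → ∀ u w,
      fderiv ℝ (fun p => (inner ℝ (fderiv ℝ X p u) (e p) : ℝ)) q w
        = (inner ℝ (fderiv ℝ X q u) (fderiv ℝ e q w) : ℝ)
          + (inner ℝ (fderiv ℝ (fderiv ℝ X) q w u) (e q) : ℝ) := by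
    intro e he u w
    rw [fderiv_inner_apply (𝕜 := ℝ) (hdXu u q hq) (he q hq) w, hev X (hdDX q hq) u w]
  -- derivative of -(κ * θ)-type functions
  have hdprod : ∀ (κ : EuclideanSpace ℝ (Fin 2) → ℝ)
      (e : EuclideanSpace ℝ (Fin 2) → EuclideanSpace ℝ (Fin 3)),
      DifferentiableAt ℝ κ q → (∀ p ∈ U, DifferentiableAt ℝ e p) → ∀ u w,
      fderiv ℝ (fun p => -(κ p * (inner ℝ (fderiv ℝ X p u) (e p) : ℝ))) q w
        = -(κ q * (fderiv ℝ (fun p => (inner ℝ (fderiv ℝ X p u) (e p) : ℝ)) q w)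
            + (inner ℝ (fderiv ℝ X q u) (e q) : ℝ) * fderiv ℝ κ q w) := by
    intro κ e hκ he u w
    have hg : DifferentiableAt ℝ (fun p => (inner ℝ (fderiv ℝ X p u) (e p) : ℝ)) q :=
      (hdXu u q hq).inner ℝ (he q hq)
    have h := ((hκ.hasFDerivAt.mul hg.hasFDerivAt).neg).fderiv
    rw [show (fun p => -(κ p * (inner ℝ (fderiv ℝ X p u) (e p) : ℝ))) = -(κ * fun p => (inner ℝ (fderiv ℝ X p u) (e p) : ℝ)) from rfl, h]
    simp [mul_comm]
  -- the two component functions of fderiv e₃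
  have hφ₁ : ∀ u, (fun p => (inner ℝ (fderiv ℝ e₃ p u) (e₁ p) : ℝ))
      =ᶠ[nhds q] (fun p => -(κ₁ p * (inner ℝ (fderiv ℝ X p u) (e₁ p) : ℝ))) := by
    intro u
    refine Filter.eventually_of_mem (hmem q hq) (fun p hp => ?_)
    show (inner ℝ (fderiv ℝ e₃ p u) (e₁ p) : ℝ) = -(κ₁ p * (inner ℝ (fderiv ℝ X p u) (e₁ p) : ℝ))
    rw [hprin p hp u]
    simp only [inner_add_left, real_inner_smul_left]
    rw [h11 p hp, h21 p hp]
    ring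
  have hφ₂ : ∀ u, (fun p => (inner ℝ (fderiv ℝ e₃ p u) (e₂ p) : ℝ))
      =ᶠ[nhds q] (fun p => -(κ₂ p * (inner ℝ (fderiv ℝ X p u) (e₂ p) : ℝ))) := by
    intro u
    refine Filter.eventually_of_mem (hmem q hq) (fun p hp => ?_)
    show (inner ℝ (fderiv ℝ e₃ p u) (e₂ p) : ℝ) = -(κ₂ p * (inner ℝ (fderiv ℝ X p u) (e₂ p) : ℝ))
    rw [hprin p hp u]
    simp only [inner_add_left, real_inner_smul_left]
    rw [h22 p hp, h12 p hp]
    ring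
  -- ⟪DX u, De_i w⟫ simplifications
  have hIP1 : ∀ u w, (inner ℝ (fderiv ℝ X q u) (fderiv ℝ e₁ q w) : ℝ)
      = (inner ℝ (fderiv ℝ X q u) (e₂ q) : ℝ) * (inner ℝ (fderiv ℝ e₁ q w) (e₂ q) : ℝ) := by
    intro u w
    rw [hDXinner u (fderiv ℝ e₁ q w), s11 w, s21 w]
    ring
  have hIP2 : ∀ u w, (inner ℝ (fderiv ℝ X q u) (fderiv ℝ e₂ q w) : ℝ)
      = -((inner ℝ (fderiv ℝ X q u) (e₁ q) : ℝ) * (inner ℝ (fderiv ℝ e₁ q w) (e₂ q) : ℝ)) := by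
    intro u w
    rw [hDXinner u (fderiv ℝ e₂ q w), s22 w, s12 w]
    ring
  -- ⟪De₃ u, De_i w⟫ simplifications
  have hND1 : ∀ u w, (inner ℝ (fderiv ℝ e₃ q u) (fderiv ℝ e₁ q w) : ℝ)
      = -(κ₂ q * (inner ℝ (fderiv ℝ X q u) (e₂ q) : ℝ))
          * (inner ℝ (fderiv ℝ e₁ q w) (e₂ q) : ℝ) := by
    intro u w
    rw [hprin q hq u]
    simp only [inner_add_left, real_inner_smul_left]
    rw [s11 w, s21 w]
    ring
  have hND2 : ∀ u w, (inner ℝ (fderiv ℝ e₃ q u) (fderiv ℝ e₂ q w) : ℝ)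
      = (κ₁ q * (inner ℝ (fderiv ℝ X q u) (e₁ q) : ℝ))
          * (inner ℝ (fderiv ℝ e₁ q w) (e₂ q) : ℝ) := by
    intro u w
    rw [hprin q hq u]
    simp only [inner_add_left, real_inner_smul_left]
    rw [s22 w, s12 w]
    ring
  -- second derivative of e₃, inner with e₁ and e₂
  have hΨ : ∀ (e : EuclideanSpace ℝ (Fin 2) → EuclideanSpace ℝ (Fin 3))
      (κ : EuclideanSpace ℝ (Fin 2) → ℝ),
      (∀ p ∈ U, DifferentiableAt ℝ e p) → DifferentiableAt ℝ κ q →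
      (∀ u, (fun p => (inner ℝ (fderiv ℝ e₃ p u) (e p) : ℝ))
        =ᶠ[nhds q] (fun p => -(κ p * (inner ℝ (fderiv ℝ X p u) (e p) : ℝ)))) →
      ∀ u w, (inner ℝ (fderiv ℝ (fderiv ℝ e₃) q w u) (e q) : ℝ)
        = -(κ q * ((inner ℝ (fderiv ℝ X q u) (fderiv ℝ e q w) : ℝ)
              + (inner ℝ (fderiv ℝ (fderiv ℝ X) q w u) (e q) : ℝ))
            + (inner ℝ (fderiv ℝ X q u) (e q) : ℝ) * fderiv ℝ κ q w)
          - (inner ℝ (fderiv ℝ e₃ q u) (fderiv ℝ e q w) : ℝ) := by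
    intro e κ he hκ hφ u w
    have h1 := fderiv_inner_apply (𝕜 := ℝ)
      ((hdDe₃ q hq).clm_apply (differentiableAt_const u)) (he q hq) w
    rw [hev e₃ (hdDe₃ q hq) u w] at h1
    have h2 : fderiv ℝ (fun p => (inner ℝ (fderiv ℝ e₃ p u) (e p) : ℝ)) q w
        = fderiv ℝ (fun p => -(κ p * (inner ℝ (fderiv ℝ X p u) (e p) : ℝ))) q w := by
      rw [(hφ u).fderiv_eq]
    rw [h2, hdprod κ e hκ he u w, hdT e he u w] at h1
    linarith
  -- Codazzi equations
  have hC1 : ∀ u w,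
      -(fderiv ℝ κ₁ q w * (inner ℝ (fderiv ℝ X q u) (e₁ q) : ℝ))
        + (κ₂ q - κ₁ q) * ((inner ℝ (fderiv ℝ X q u) (e₂ q) : ℝ)
            * (inner ℝ (fderiv ℝ e₁ q w) (e₂ q) : ℝ))
      = -(fderiv ℝ κ₁ q u * (inner ℝ (fderiv ℝ X q w) (e₁ q) : ℝ))
        + (κ₂ q - κ₁ q) * ((inner ℝ (fderiv ℝ X q w) (e₂ q) : ℝ)
            * (inner ℝ (fderiv ℝ e₁ q u) (e₂ q) : ℝ)) := by
    intro u w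
    have A := hΨ e₁ κ₁ hde₁ (hdκ₁ q hq) hφ₁ u w
    have B := hΨ e₁ κ₁ hde₁ (hdκ₁ q hq) hφ₁ w u
    rw [hIP1 u w, hND1 u w] at A
    rw [hIP1 w u, hND1 w u, hsymX u w] at B
    have S : (inner ℝ (fderiv ℝ (fderiv ℝ e₃) q w u) (e₁ q) : ℝ)
        = (inner ℝ (fderiv ℝ (fderiv ℝ e₃) q u w) (e₁ q) : ℝ) := by rw [hsyme₃ u w]
    rw [A, B] at S
    linarith [S]
  have hC2 : ∀ u w,
      -(fderiv ℝ κ₂ q w * (inner ℝ (fderiv ℝ X q u) (e₂ q) : ℝ))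
        + (κ₂ q - κ₁ q) * ((inner ℝ (fderiv ℝ X q u) (e₁ q) : ℝ)
            * (inner ℝ (fderiv ℝ e₁ q w) (e₂ q) : ℝ))
      = -(fderiv ℝ κ₂ q u * (inner ℝ (fderiv ℝ X q w) (e₂ q) : ℝ))
        + (κ₂ q - κ₁ q) * ((inner ℝ (fderiv ℝ X q w) (e₁ q) : ℝ)
            * (inner ℝ (fderiv ℝ e₁ q u) (e₂ q) : ℝ)) := by
    intro u w
    have A := hΨ e₂ κ₂ hde₂ (hdκ₂ q hq) hφ₂ u w
    have B := hΨ e₂ κ₂ hde₂ (hdκ₂ q hq) hφ₂ w u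
    rw [hIP2 u w, hND2 u w] at A
    rw [hIP2 w u, hND2 w u, hsymX u w] at B
    have S : (inner ℝ (fderiv ℝ (fderiv ℝ e₃) q w u) (e₂ q) : ℝ)
        = (inner ℝ (fderiv ℝ (fderiv ℝ e₃) q u w) (e₂ q) : ℝ) := by rw [hsyme₃ u w]
    rw [A, B] at S
    linarith [S]
  -- θ values on f₁, f₂
  have hT11 : (inner ℝ (fderiv ℝ X q (f₁ q)) (e₁ q) : ℝ) = 1 := by rw [hfe₁ q hq]; exact h11 q hq
  have hT12 : (inner ℝ (fderiv ℝ X q (f₁ q)) (e₂ q) : ℝ) = 0 := by rw [hfe₁ q hq]; exact h12 q hq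
  have hT21 : (inner ℝ (fderiv ℝ X q (f₂ q)) (e₁ q) : ℝ) = 0 := by rw [hfe₂ q hq]; exact h21 q hq
  have hT22 : (inner ℝ (fderiv ℝ X q (f₂ q)) (e₂ q) : ℝ) = 1 := by rw [hfe₂ q hq]; exact h22 q hq
  -- abbreviations for the scalars involved
  set k : ℝ := κ₁ q with hk
  have hkpos : 0 < k := hκ₁pos q hq
  have hknz : k ≠ 0 := ne_of_gt hkpos
  have hκ₂q : κ₂ q = -k⁻¹ := by
    have h := hK q hq
    field_simp
    linarith [h]
  -- derivative of κ₂ in terms of κ₁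
  have hdκ₂eq : ∀ w, fderiv ℝ κ₂ q w = k⁻¹ * k⁻¹ * fderiv ℝ κ₁ q w := by
    intro w
    have h1 : (fun p => κ₁ p * κ₂ p) =ᶠ[nhds q] (fun _ => (-1 : ℝ)) :=
      Filter.eventually_of_mem (hmem q hq) hK
    have h2 : fderiv ℝ (fun p => κ₁ p * κ₂ p) q = 0 := by rw [h1.fderiv_eq]; simp
    have h3 := fderiv_mul (hdκ₁ q hq) (hdκ₂ q hq)
    rw [show κ₁ * κ₂ = (fun p => κ₁ p * κ₂ p) from rfl, h2] at h3
    have h4 : κ₁ q * fderiv ℝ κ₂ q w + κ₂ q * fderiv ℝ κ₁ q w = 0 := by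
      have h5 := congrArg (fun L => L w) h3
      simpa using h5.symm
    rw [hκ₂q, ← hk] at h4
    have h5 : k * fderiv ℝ κ₂ q w = k⁻¹ * fderiv ℝ κ₁ q w := by linear_combination h4
    refine mul_left_cancel₀ hknz ?_
    rw [h5]
    field_simp
  -- derivative of α
  have hdα : ∀ w, fderiv ℝ α q w = (1 + k ^ 2)⁻¹ * fderiv ℝ κ₁ q w := by
    intro w
    have hαf : α = fun p => Real.arctan (κ₁ p) := funext hα
    have h := (Real.hasDerivAt_arctan (κ₁ q)).comp_hasFDerivAt q (hdκ₁ q hq).hasFDerivAt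
    rw [hαf]
    rw [show (fun p => Real.arctan (κ₁ p)) = Real.arctan ∘ κ₁ from rfl, h.fderiv]
    simp [← hk]
  -- tan and cot of α
  have htanα : Real.tan (α q) = k := by rw [hα q, Real.tan_arctan, ← hk]
  have hcotα : Real.cot (α q) = k⁻¹ := by
    rw [hα q, Real.cot_eq_cos_div_sin, Real.cos_arctan, Real.sin_arctan, ← hk]
    have h : Real.sqrt (1 + k ^ 2) ≠ 0 := by positivity
    field_simp
  -- instantiate Codazzi
  have E2 := hC2 (f₁ q) (f₂ q)
  rw [hT11, hT12, hT21, hT22] at E2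
  have E3 := hC1 (f₂ q) v
  rw [hT21, hT22] at E3
  rw [hdκ₂eq (f₂ q), hdκ₂eq (f₁ q)] at E2
  rw [hκ₂q] at E2 E3
  -- final algebra
  rw [htanα, hcotα, hdα (f₂ q), hdα (f₁ q)]
  have hsum : k⁻¹ + k ≠ 0 := by positivity
  have hW : (k⁻¹ + k) * (inner ℝ (fderiv ℝ e₁ q v) (e₂ q) : ℝ)
      = fderiv ℝ κ₁ q (f₂ q) * (inner ℝ (fderiv ℝ X q v) (e₁ q) : ℝ)
        + k⁻¹ * k⁻¹ * fderiv ℝ κ₁ q (f₁ q) * (inner ℝ (fderiv ℝ X q v) (e₂ q) : ℝ) := by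
    linear_combination (-1 : ℝ) * E3 - (inner ℝ (fderiv ℝ X q v) (e₂ q) : ℝ) * E2
  refine mul_left_cancel₀ hsum ?_
  rw [hW]
  field_simp
end

section
/- Assume additionally that κ₁(q) > 0 and κ₁(q)·κ₂(q) = −1 for all q ∈ U (constant Gaussian curvature −1), set α(q) := arctan(κ₁(q)), and define the 1-forms dual to the asymptotic directions: η¹_q(v) := (1/2)·( sec(α(q))·θ¹_q(v) − csc(α(q))·θ²_q(v) ) and η²_q(v) := (1/2)·( sec(α(q))·θ¹_q(v) + csc(α(q))·θ²_q(v) ). Then η¹ and η² are closed: for i = 1, 2, every q ∈ U, and all v, w ∈ ℝ², D_q( q' ↦ η^i_{q'}(w) )(v) = D_q( q' ↦ η^i_{q'}(v) )(w); that is, dη¹ = 0 and dη² = 0 on U. -/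
open Real Filter

local notation "⟪" x ", " y "⟫" => @inner ℝ _ _ x y

private lemma onb_expand' {a b c : EuclideanSpace ℝ (Fin 3)} (h : Orthonormal ℝ ![a, b, c])
    (z : EuclideanSpace ℝ (Fin 3)) :
    z = ⟪a, z⟫ • a + ⟪b, z⟫ • b + ⟪c, z⟫ • c := by
  classical
  have hcard : Fintype.card (Fin 3) = Module.finrank ℝ (EuclideanSpace ℝ (Fin 3)) := by simp
  set B := basisOfOrthonormalOfCardEqFinrank h hcard with hBdef
  have hB : ⇑B = ![a, b, c] := coe_basisOfOrthonormalOfCardEqFinrank h hcard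
  have horthB : Orthonormal ℝ B := by rw [hB]; exact h
  have hsum := (B.toOrthonormalBasis horthB).sum_repr' z
  rw [Fin.sum_univ_three] at hsum
  simp only [Module.Basis.coe_toOrthonormalBasis, hB] at hsum
  simpa using hsum.symm

private lemma key_algebra (ε k κ2 C S dv dw t1v t1w t2v t2w ωv ωw D1wv D1vw D2wv D2vw : ℝ)
    (hCpos : 0 < C) (hSpos : 0 < S)
    (hS : S = k * C) (hC2 : (1 + k^2) * C^2 = 1) (hk2 : k * κ2 = -1)
    (hX1 : D1wv - D1vw = t2w*ωv - t2v*ωw)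
    (hX2 : D2wv - D2vw = -(t1w*ωv - t1v*ωw))
    (hA : dv*t1w - dw*t1v = (κ2 - k)*(t2w*ωv - t2v*ωw))
    (hB : dv*t2w - dw*t2v = k^2*(κ2 - k)*(t1w*ωv - t1v*ωw)) :
    (1/2)*((C⁻¹*D1wv + t1w*(S*dv)) + ε*(S⁻¹*D2wv + t2w*(-(C^3/S^2)*dv)))
      = (1/2)*((C⁻¹*D1vw + t1v*(S*dw)) + ε*(S⁻¹*D2vw + t2v*(-(C^3/S^2)*dw))) := by
  have hk : 0 < k := by
    rcases lt_trichotomy k 0 with h | h | h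
    · nlinarith
    · exfalso; rw [h] at hS; simp at hS; exact hSpos.ne' hS
    · exact h
  have hκ2 : κ2 = -(1/k) := by field_simp; linarith
  subst hκ2 hS
  field_simp at hA hB ⊢
  linear_combination k^2*hX1 + (k^2*C^2)*hA + (ε*k)*hX2 - (ε*C^2)*hB
    - (k^2*(t2w*ωv - t2v*ωw) - ε*k*(t1w*ωv - t1v*ωw))*hC2

set_option maxHeartbeats 1000000 in
/-- With `κ₁ > 0` and `κ₁·κ₂ = -1` (constant Gaussian curvature `-1`) and
`α = arctan κ₁`, the 1-forms dual to the asymptotic directions,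
`η¹ = (1/2)(sec α · θ¹ - csc α · θ²)` and `η² = (1/2)(sec α · θ¹ + csc α · θ²)`,
are closed: `dη¹ = 0` and `dη² = 0` on `U`. -/
theorem asymptotic_dual_forms_closed
    (U : Set (EuclideanSpace ℝ (Fin 2))) (hU : IsOpen U)
    (X : EuclideanSpace ℝ (Fin 2) → EuclideanSpace ℝ (Fin 3))
    (hX : ContDiffOn ℝ (⊤ : ℕ∞) X U)
    (hXimm : ∀ q ∈ U, Function.Injective (fderiv ℝ X q))
    (e₁ e₂ e₃ : EuclideanSpace ℝ (Fin 2) → EuclideanSpace ℝ (Fin 3))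
    (he₁ : ContDiffOn ℝ (⊤ : ℕ∞) e₁ U) (he₂ : ContDiffOn ℝ (⊤ : ℕ∞) e₂ U) (he₃ : ContDiffOn ℝ (⊤ : ℕ∞) e₃ U)
    (horth : ∀ q ∈ U, Orthonormal ℝ ![e₁ q, e₂ q, e₃ q])
    (htan : ∀ q ∈ U, ∀ v : EuclideanSpace ℝ (Fin 2),
      (inner ℝ (fderiv ℝ X q v) (e₃ q) : ℝ) = 0)
    (f₁ f₂ : EuclideanSpace ℝ (Fin 2) → EuclideanSpace ℝ (Fin 2))
    (hf₁ : ContDiffOn ℝ (⊤ : ℕ∞) f₁ U) (hf₂ : ContDiffOn ℝ (⊤ : ℕ∞) f₂ U)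
    (hfe₁ : ∀ q ∈ U, fderiv ℝ X q (f₁ q) = e₁ q)
    (hfe₂ : ∀ q ∈ U, fderiv ℝ X q (f₂ q) = e₂ q)
    (κ₁ κ₂ : EuclideanSpace ℝ (Fin 2) → ℝ)
    (hκ₁ : ContDiffOn ℝ (⊤ : ℕ∞) κ₁ U) (hκ₂ : ContDiffOn ℝ (⊤ : ℕ∞) κ₂ U)
    (hprin : ∀ q ∈ U, ∀ v : EuclideanSpace ℝ (Fin 2),
      fderiv ℝ e₃ q v
        = (-(κ₁ q * (inner ℝ (fderiv ℝ X q v) (e₁ q) : ℝ))) • e₁ q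
          + (-(κ₂ q * (inner ℝ (fderiv ℝ X q v) (e₂ q) : ℝ))) • e₂ q)
    (hκ₁pos : ∀ q ∈ U, 0 < κ₁ q)
    (hK : ∀ q ∈ U, κ₁ q * κ₂ q = -1)
    (α : EuclideanSpace ℝ (Fin 2) → ℝ)
    (hα : ∀ q, α q = Real.arctan (κ₁ q))
    (η₁ η₂ : EuclideanSpace ℝ (Fin 2) → EuclideanSpace ℝ (Fin 2) → ℝ)
    (hη₁ : ∀ q v, η₁ q v
      = (1 / 2) * ((Real.cos (α q))⁻¹ * (inner ℝ (fderiv ℝ X q v) (e₁ q) : ℝ)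
          - (Real.sin (α q))⁻¹ * (inner ℝ (fderiv ℝ X q v) (e₂ q) : ℝ)))
    (hη₂ : ∀ q v, η₂ q v
      = (1 / 2) * ((Real.cos (α q))⁻¹ * (inner ℝ (fderiv ℝ X q v) (e₁ q) : ℝ)
          + (Real.sin (α q))⁻¹ * (inner ℝ (fderiv ℝ X q v) (e₂ q) : ℝ))) :
    ∀ q ∈ U, ∀ v w : EuclideanSpace ℝ (Fin 2),
      fderiv ℝ (fun q' => η₁ q' w) q v = fderiv ℝ (fun q' => η₁ q' v) q w ∧
      fderiv ℝ (fun q' => η₂ q' w) q v = fderiv ℝ (fun q' => η₂ q' v) q w := by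
  intro q hq v w
  have hUq : U ∈ nhds q := hU.mem_nhds hq
  have cX := hX.contDiffAt hUq
  have ce1 := he₁.contDiffAt hUq
  have ce2 := he₂.contDiffAt hUq
  have ce3 := he₃.contDiffAt hUq
  have dX : DifferentiableAt ℝ X q := cX.differentiableAt (by simp)
  have de1 : DifferentiableAt ℝ e₁ q := ce1.differentiableAt (by simp)
  have de2 : DifferentiableAt ℝ e₂ q := ce2.differentiableAt (by simp)
  have de3 : DifferentiableAt ℝ e₃ q := ce3.differentiableAt (by simp)
  have dκ1 : DifferentiableAt ℝ κ₁ q := (hκ₁.contDiffAt hUq).differentiableAt (by simp)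
  have dκ2 : DifferentiableAt ℝ κ₂ q := (hκ₂.contDiffAt hUq).differentiableAt (by simp)
  have dDX : DifferentiableAt ℝ (fderiv ℝ X) q :=
    (cX.fderiv_right (m := (⊤ : ℕ∞)) (by simp)).differentiableAt (by simp)
  have dDe3 : DifferentiableAt ℝ (fderiv ℝ e₃) q :=
    (ce3.fderiv_right (m := (⊤ : ℕ∞)) (by simp)).differentiableAt (by simp)
  -- differentiability of q' ↦ fderiv X q' u and the θ's
  have dXu : ∀ u, DifferentiableAt ℝ (fun q' => fderiv ℝ X q' u) q :=
    fun u => dDX.clm_apply (differentiableAt_const u)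
  have dθ1 : ∀ u, DifferentiableAt ℝ (fun q' => ⟪fderiv ℝ X q' u, e₁ q'⟫) q :=
    fun u => (dXu u).inner ℝ de1
  have dθ2 : ∀ u, DifferentiableAt ℝ (fun q' => ⟪fderiv ℝ X q' u, e₂ q'⟫) q :=
    fun u => (dXu u).inner ℝ de2
  have hfdX : ∀ u, fderiv ℝ (fun q' => fderiv ℝ X q' u) q = (fderiv ℝ (fderiv ℝ X) q).flip u := by
    intro u; rw [fderiv_clm_apply dDX (differentiableAt_const u)]; simp
  have hθd : ∀ (e : EuclideanSpace ℝ (Fin 2) → EuclideanSpace ℝ (Fin 3)),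
      DifferentiableAt ℝ e q → ∀ dir u : EuclideanSpace ℝ (Fin 2),
      fderiv ℝ (fun q' => ⟪fderiv ℝ X q' u, e q'⟫) q dir
        = ⟪fderiv ℝ X q u, fderiv ℝ e q dir⟫
          + ⟪fderiv ℝ (fderiv ℝ X) q dir u, e q⟫ := by
    intro e he dir u
    rw [fderiv_inner_apply (𝕜 := ℝ) (dXu u) he, hfdX u]
    rfl
  have hsymX : ∀ dir u, fderiv ℝ (fderiv ℝ X) q dir u = fderiv ℝ (fderiv ℝ X) q u dir :=
    cX.isSymmSndFDerivAt (by simp; exact WithTop.coe_le_coe.mpr le_top)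
  -- orthonormality values on U
  have hON : ∀ x ∈ U, ∀ i j : Fin 3,
      ⟪![e₁ x, e₂ x, e₃ x] i, ![e₁ x, e₂ x, e₃ x] j⟫ = if i = j then (1:ℝ) else 0 :=
    fun x hx => orthonormal_iff_ite.mp (horth x hx)
  have h11 : ∀ x ∈ U, ⟪e₁ x, e₁ x⟫ = (1:ℝ) := fun x hx => by simpa using hON x hx 0 0
  have h22 : ∀ x ∈ U, ⟪e₂ x, e₂ x⟫ = (1:ℝ) := fun x hx => by simpa using hON x hx 1 1
  have h12 : ∀ x ∈ U, ⟪e₁ x, e₂ x⟫ = (0:ℝ) := fun x hx => by simpa using hON x hx 0 1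
  -- derivative of constant inner products
  have hconstD : ∀ (f g : EuclideanSpace ℝ (Fin 2) → EuclideanSpace ℝ (Fin 3)) (r : ℝ),
      DifferentiableAt ℝ f q → DifferentiableAt ℝ g q →
      (∀ x ∈ U, ⟪f x, g x⟫ = r) → ∀ dir,
      ⟪f q, fderiv ℝ g q dir⟫ + ⟪fderiv ℝ f q dir, g q⟫ = 0 := by
    intro f g r hf hg hc dir
    have heq : (fun q' => ⟪f q', g q'⟫) =ᶠ[nhds q] fun _ => r :=
      eventually_of_mem hUq hc
    have h0 : fderiv ℝ (fun q' => ⟪f q', g q'⟫) q = 0 := by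
      rw [heq.fderiv_eq]; exact fderiv_const_apply r
    have happ := fderiv_inner_apply (𝕜 := ℝ) hf hg dir
    rw [h0] at happ
    simpa using happ.symm
  have hω11 : ∀ dir, ⟪e₁ q, fderiv ℝ e₁ q dir⟫ = (0:ℝ) := by
    intro dir
    have h := hconstD e₁ e₁ 1 de1 de1 h11 dir
    rw [real_inner_comm (e₁ q) (fderiv ℝ e₁ q dir)] at h
    linarith
  have hω22 : ∀ dir, ⟪e₂ q, fderiv ℝ e₂ q dir⟫ = (0:ℝ) := by
    intro dir
    have h := hconstD e₂ e₂ 1 de2 de2 h22 dir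
    rw [real_inner_comm (e₂ q) (fderiv ℝ e₂ q dir)] at h
    linarith
  have hω21 : ∀ dir, ⟪e₁ q, fderiv ℝ e₂ q dir⟫ = -⟪e₂ q, fderiv ℝ e₁ q dir⟫ := by
    intro dir
    have h := hconstD e₁ e₂ 0 de1 de2 h12 dir
    rw [real_inner_comm (e₂ q) (fderiv ℝ e₁ q dir)] at h
    linarith
  -- expansion of tangent vectors
  have hexp : ∀ u, fderiv ℝ X q u
      = ⟪e₁ q, fderiv ℝ X q u⟫ • e₁ q + ⟪e₂ q, fderiv ℝ X q u⟫ • e₂ q := by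
    intro u
    have h := onb_expand' (horth q hq) (fderiv ℝ X q u)
    rw [real_inner_comm (fderiv ℝ X q u) (e₃ q), htan q hq u] at h
    simpa using h
  -- inner products of tangent vectors with frame derivatives
  have hE1 : ∀ u dir, ⟪fderiv ℝ X q u, fderiv ℝ e₁ q dir⟫
      = ⟪fderiv ℝ X q u, e₂ q⟫ * ⟪e₂ q, fderiv ℝ e₁ q dir⟫ := by
    intro u dir
    conv_lhs => rw [hexp u]
    rw [inner_add_left, real_inner_smul_left, real_inner_smul_left, hω11 dir,
      real_inner_comm (fderiv ℝ X q u) (e₂ q)]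
    ring
  have hE2 : ∀ u dir, ⟪fderiv ℝ X q u, fderiv ℝ e₂ q dir⟫
      = -(⟪fderiv ℝ X q u, e₁ q⟫ * ⟪e₂ q, fderiv ℝ e₁ q dir⟫) := by
    intro u dir
    conv_lhs => rw [hexp u]
    rw [inner_add_left, real_inner_smul_left, real_inner_smul_left, hω22 dir, hω21 dir,
      real_inner_comm (fderiv ℝ X q u) (e₁ q)]
    ring
  -- derivatives of the θ forms
  have hDθ1 : ∀ dir u, fderiv ℝ (fun q' => ⟪fderiv ℝ X q' u, e₁ q'⟫) q dir
      = ⟪fderiv ℝ X q u, e₂ q⟫ * ⟪e₂ q, fderiv ℝ e₁ q dir⟫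
        + ⟪fderiv ℝ (fderiv ℝ X) q dir u, e₁ q⟫ := by
    intro dir u; rw [hθd e₁ de1 dir u, hE1 u dir]
  have hDθ2 : ∀ dir u, fderiv ℝ (fun q' => ⟪fderiv ℝ X q' u, e₂ q'⟫) q dir
      = -(⟪fderiv ℝ X q u, e₁ q⟫ * ⟪e₂ q, fderiv ℝ e₁ q dir⟫)
        + ⟪fderiv ℝ (fderiv ℝ X) q dir u, e₂ q⟫ := by
    intro dir u; rw [hθd e₂ de2 dir u, hE2 u dir]
  -- antisymmetrized structure equations
  have hX1 : fderiv ℝ (fun q' => ⟪fderiv ℝ X q' w, e₁ q'⟫) q v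
      - fderiv ℝ (fun q' => ⟪fderiv ℝ X q' v, e₁ q'⟫) q w
      = ⟪fderiv ℝ X q w, e₂ q⟫ * ⟪e₂ q, fderiv ℝ e₁ q v⟫
        - ⟪fderiv ℝ X q v, e₂ q⟫ * ⟪e₂ q, fderiv ℝ e₁ q w⟫ := by
    rw [hDθ1 v w, hDθ1 w v, hsymX v w]; ring
  have hX2 : fderiv ℝ (fun q' => ⟪fderiv ℝ X q' w, e₂ q'⟫) q v
      - fderiv ℝ (fun q' => ⟪fderiv ℝ X q' v, e₂ q'⟫) q w
      = -(⟪fderiv ℝ X q w, e₁ q⟫ * ⟪e₂ q, fderiv ℝ e₁ q v⟫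
        - ⟪fderiv ℝ X q v, e₁ q⟫ * ⟪e₂ q, fderiv ℝ e₁ q w⟫) := by
    rw [hDθ2 v w, hDθ2 w v, hsymX v w]; ring
  -- second derivative of e₃ and Codazzi equations
  have hde3u : ∀ u, DifferentiableAt ℝ (fun q' => fderiv ℝ e₃ q' u) q :=
    fun u => dDe3.clm_apply (differentiableAt_const u)
  have hfdE3 : ∀ u, fderiv ℝ (fun q' => fderiv ℝ e₃ q' u) q
      = (fderiv ℝ (fderiv ℝ e₃) q).flip u := by
    intro u; rw [fderiv_clm_apply dDe3 (differentiableAt_const u)]; simp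
  have hLHSder : ∀ (cvec : EuclideanSpace ℝ (Fin 3)) u dir,
      fderiv ℝ (fun q' => ⟪fderiv ℝ e₃ q' u, cvec⟫) q dir
        = ⟪fderiv ℝ (fderiv ℝ e₃) q dir u, cvec⟫ := by
    intro cvec u dir
    rw [fderiv_inner_apply (𝕜 := ℝ) (hde3u u) (differentiableAt_const cvec), hfdE3 u]
    simp
  have hsymE3 : ∀ dir u, fderiv ℝ (fderiv ℝ e₃) q dir u = fderiv ℝ (fderiv ℝ e₃) q u dir :=
    ce3.isSymmSndFDerivAt (by simp; exact WithTop.coe_le_coe.mpr le_top)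
  have hprinEq : ∀ (cvec : EuclideanSpace ℝ (Fin 3)) u,
      (fun q' => ⟪fderiv ℝ e₃ q' u, cvec⟫) =ᶠ[nhds q]
        (fun q' => -(κ₁ q' * ⟪fderiv ℝ X q' u, e₁ q'⟫) * ⟪e₁ q', cvec⟫
          + -(κ₂ q' * ⟪fderiv ℝ X q' u, e₂ q'⟫) * ⟪e₂ q', cvec⟫) := by
    intro cvec u
    filter_upwards [hUq] with x hx
    rw [hprin x hx u, inner_add_left, real_inner_smul_left, real_inner_smul_left]
  have dg1 : ∀ cvec : EuclideanSpace ℝ (Fin 3),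
      DifferentiableAt ℝ (fun q' => ⟪e₁ q', cvec⟫) q :=
    fun cvec => de1.inner ℝ (differentiableAt_const cvec)
  have dg2 : ∀ cvec : EuclideanSpace ℝ (Fin 3),
      DifferentiableAt ℝ (fun q' => ⟪e₂ q', cvec⟫) q :=
    fun cvec => de2.inner ℝ (differentiableAt_const cvec)
  have hg1d : ∀ (cvec : EuclideanSpace ℝ (Fin 3)) dir,
      fderiv ℝ (fun q' => ⟪e₁ q', cvec⟫) q dir = ⟪fderiv ℝ e₁ q dir, cvec⟫ := by
    intro cvec dir
    rw [fderiv_inner_apply (𝕜 := ℝ) de1 (differentiableAt_const cvec)]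
    simp
  have hg2d : ∀ (cvec : EuclideanSpace ℝ (Fin 3)) dir,
      fderiv ℝ (fun q' => ⟪e₂ q', cvec⟫) q dir = ⟪fderiv ℝ e₂ q dir, cvec⟫ := by
    intro cvec dir
    rw [fderiv_inner_apply (𝕜 := ℝ) de2 (differentiableAt_const cvec)]
    simp
  have hn1 : ∀ u, DifferentiableAt ℝ (fun q' => -(κ₁ q' * ⟪fderiv ℝ X q' u, e₁ q'⟫)) q :=
    fun u => (dκ1.mul (dθ1 u)).neg
  have hn2 : ∀ u, DifferentiableAt ℝ (fun q' => -(κ₂ q' * ⟪fderiv ℝ X q' u, e₂ q'⟫)) q :=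
    fun u => (dκ2.mul (dθ2 u)).neg
  have hn1d : ∀ u dir, fderiv ℝ (fun q' => -(κ₁ q' * ⟪fderiv ℝ X q' u, e₁ q'⟫)) q dir
      = -(fderiv ℝ κ₁ q dir * ⟪fderiv ℝ X q u, e₁ q⟫
          + κ₁ q * fderiv ℝ (fun q' => ⟪fderiv ℝ X q' u, e₁ q'⟫) q dir) := by
    intro u dir
    rw [fderiv_fun_neg, fderiv_fun_mul dκ1 (dθ1 u)]
    simp only [ContinuousLinearMap.neg_apply, ContinuousLinearMap.add_apply,
      ContinuousLinearMap.smul_apply, smul_eq_mul]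
    ring
  have hn2d : ∀ u dir, fderiv ℝ (fun q' => -(κ₂ q' * ⟪fderiv ℝ X q' u, e₂ q'⟫)) q dir
      = -(fderiv ℝ κ₂ q dir * ⟪fderiv ℝ X q u, e₂ q⟫
          + κ₂ q * fderiv ℝ (fun q' => ⟪fderiv ℝ X q' u, e₂ q'⟫) q dir) := by
    intro u dir
    rw [fderiv_fun_neg, fderiv_fun_mul dκ2 (dθ2 u)]
    simp only [ContinuousLinearMap.neg_apply, ContinuousLinearMap.add_apply,
      ContinuousLinearMap.smul_apply, smul_eq_mul]
    ring
  have hCod : ∀ (cvec : EuclideanSpace ℝ (Fin 3)) u dir,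
      ⟪fderiv ℝ (fderiv ℝ e₃) q dir u, cvec⟫
        = -(fderiv ℝ κ₁ q dir * ⟪fderiv ℝ X q u, e₁ q⟫
              + κ₁ q * fderiv ℝ (fun q' => ⟪fderiv ℝ X q' u, e₁ q'⟫) q dir) * ⟪e₁ q, cvec⟫
          + -(κ₁ q * ⟪fderiv ℝ X q u, e₁ q⟫) * ⟪fderiv ℝ e₁ q dir, cvec⟫
          + (-(fderiv ℝ κ₂ q dir * ⟪fderiv ℝ X q u, e₂ q⟫
              + κ₂ q * fderiv ℝ (fun q' => ⟪fderiv ℝ X q' u, e₂ q'⟫) q dir) * ⟪e₂ q, cvec⟫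
            + -(κ₂ q * ⟪fderiv ℝ X q u, e₂ q⟫) * ⟪fderiv ℝ e₂ q dir, cvec⟫) := by
    intro cvec u dir
    rw [← hLHSder cvec u dir, (hprinEq cvec u).fderiv_eq]
    rw [fderiv_fun_add ((hn1 u).fun_mul (dg1 cvec)) ((hn2 u).fun_mul (dg2 cvec)),
      fderiv_fun_mul (hn1 u) (dg1 cvec), fderiv_fun_mul (hn2 u) (dg2 cvec)]
    simp only [ContinuousLinearMap.add_apply, ContinuousLinearMap.smul_apply, smul_eq_mul]
    rw [hn1d u dir, hn2d u dir, hg1d cvec dir, hg2d cvec dir]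
    ring
  -- pointwise frame values
  have c11 : ⟪e₁ q, e₁ q⟫ = (1:ℝ) := h11 q hq
  have c12 : ⟪e₁ q, e₂ q⟫ = (0:ℝ) := h12 q hq
  have c21 : ⟪e₂ q, e₁ q⟫ = (0:ℝ) := (real_inner_comm (e₁ q) (e₂ q)).trans c12
  have c22 : ⟪e₂ q, e₂ q⟫ = (1:ℝ) := h22 q hq
  have cD11 : ∀ dir, ⟪fderiv ℝ e₁ q dir, e₁ q⟫ = (0:ℝ) :=
    fun dir => (real_inner_comm (e₁ q) (fderiv ℝ e₁ q dir)).trans (hω11 dir)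
  have cD12 : ∀ dir, ⟪fderiv ℝ e₁ q dir, e₂ q⟫ = ⟪e₂ q, fderiv ℝ e₁ q dir⟫ :=
    fun dir => real_inner_comm (e₂ q) (fderiv ℝ e₁ q dir)
  have cD21 : ∀ dir, ⟪fderiv ℝ e₂ q dir, e₁ q⟫ = -⟪e₂ q, fderiv ℝ e₁ q dir⟫ :=
    fun dir => (real_inner_comm (e₁ q) (fderiv ℝ e₂ q dir)).trans (hω21 dir)
  have cD22 : ∀ dir, ⟪fderiv ℝ e₂ q dir, e₂ q⟫ = (0:ℝ) :=
    fun dir => (real_inner_comm (e₂ q) (fderiv ℝ e₂ q dir)).trans (hω22 dir)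
  have hCod1 : ∀ u dir, ⟪fderiv ℝ (fderiv ℝ e₃) q dir u, e₁ q⟫
      = -(fderiv ℝ κ₁ q dir * ⟪fderiv ℝ X q u, e₁ q⟫
          + κ₁ q * fderiv ℝ (fun q' => ⟪fderiv ℝ X q' u, e₁ q'⟫) q dir)
        + κ₂ q * ⟪fderiv ℝ X q u, e₂ q⟫ * ⟪e₂ q, fderiv ℝ e₁ q dir⟫ := by
    intro u dir
    rw [hCod (e₁ q) u dir, c11, c21, cD11 dir, cD21 dir]
    ring
  have hCod2 : ∀ u dir, ⟪fderiv ℝ (fderiv ℝ e₃) q dir u, e₂ q⟫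
      = -(fderiv ℝ κ₂ q dir * ⟪fderiv ℝ X q u, e₂ q⟫
          + κ₂ q * fderiv ℝ (fun q' => ⟪fderiv ℝ X q' u, e₂ q'⟫) q dir)
        - κ₁ q * ⟪fderiv ℝ X q u, e₁ q⟫ * ⟪e₂ q, fderiv ℝ e₁ q dir⟫ := by
    intro u dir
    rw [hCod (e₂ q) u dir, c12, c22, cD12 dir, cD22 dir]
    ring
  have hA : fderiv ℝ κ₁ q v * ⟪fderiv ℝ X q w, e₁ q⟫
        - fderiv ℝ κ₁ q w * ⟪fderiv ℝ X q v, e₁ q⟫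
      = (κ₂ q - κ₁ q) * (⟪fderiv ℝ X q w, e₂ q⟫ * ⟪e₂ q, fderiv ℝ e₁ q v⟫
          - ⟪fderiv ℝ X q v, e₂ q⟫ * ⟪e₂ q, fderiv ℝ e₁ q w⟫) := by
    have h1 := hCod1 w v
    have h2 := hCod1 v w
    rw [hsymE3 v w] at h1
    rw [hDθ1 v w] at h1
    rw [hDθ1 w v] at h2
    rw [hsymX v w] at h1
    linear_combination h1 - h2
  have hkpos := hκ₁pos q hq
  have hkne : κ₁ q ≠ 0 := ne_of_gt hkpos
  have heqκ2 : κ₂ =ᶠ[nhds q] fun q' => -(κ₁ q')⁻¹ := by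
    filter_upwards [hUq] with x hx
    have h0 : κ₁ x ≠ 0 := ne_of_gt (hκ₁pos x hx)
    have hh := hK x hx
    field_simp
    linear_combination hh
  have hdκ2F : HasFDerivAt (fun q' => -(κ₁ q')⁻¹) (((κ₁ q)^2)⁻¹ • fderiv ℝ κ₁ q) q := by
    have h1 : HasDerivAt (fun x : ℝ => -x⁻¹) (((κ₁ q)^2)⁻¹) (κ₁ q) := by
      simpa using (hasDerivAt_inv hkne).fun_neg
    exact h1.comp_hasFDerivAt q dκ1.hasFDerivAt
  have hκ₂d : ∀ dir, fderiv ℝ κ₂ q dir = ((κ₁ q)^2)⁻¹ * fderiv ℝ κ₁ q dir := by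
    intro dir
    rw [heqκ2.fderiv_eq, hdκ2F.fderiv]
    simp
  have hκ₂d' : ∀ dir, (κ₁ q)^2 * fderiv ℝ κ₂ q dir = fderiv ℝ κ₁ q dir := by
    intro dir; rw [hκ₂d dir]; field_simp
  have hB : fderiv ℝ κ₁ q v * ⟪fderiv ℝ X q w, e₂ q⟫
        - fderiv ℝ κ₁ q w * ⟪fderiv ℝ X q v, e₂ q⟫
      = (κ₁ q)^2 * (κ₂ q - κ₁ q) * (⟪fderiv ℝ X q w, e₁ q⟫ * ⟪e₂ q, fderiv ℝ e₁ q v⟫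
          - ⟪fderiv ℝ X q v, e₁ q⟫ * ⟪e₂ q, fderiv ℝ e₁ q w⟫) := by
    have h1 := hCod2 w v
    have h2 := hCod2 v w
    rw [hsymE3 v w] at h1
    rw [hDθ2 v w] at h1
    rw [hDθ2 w v] at h2
    rw [hsymX v w] at h1
    linear_combination ⟪fderiv ℝ X q v, e₂ q⟫ * hκ₂d' w - ⟪fderiv ℝ X q w, e₂ q⟫ * hκ₂d' v
      + (κ₁ q)^2 * (h1 - h2)
  -- trigonometric facts
  have hcos : 0 < Real.cos (Real.arctan (κ₁ q)) := Real.cos_arctan_pos _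
  have hsin : 0 < Real.sin (Real.arctan (κ₁ q)) := by
    rw [Real.sin_arctan]
    positivity
  have hSC : Real.sin (Real.arctan (κ₁ q)) = κ₁ q * Real.cos (Real.arctan (κ₁ q)) := by
    have h := Real.tan_arctan (κ₁ q)
    rw [Real.tan_eq_sin_div_cos, div_eq_iff hcos.ne'] at h
    exact h
  have hpyth := Real.sin_sq_add_cos_sq (Real.arctan (κ₁ q))
  have hC2 : (1 + (κ₁ q)^2) * (Real.cos (Real.arctan (κ₁ q)))^2 = 1 := by
    linear_combination hpyth - (Real.sin (Real.arctan (κ₁ q))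
      + κ₁ q * Real.cos (Real.arctan (κ₁ q))) * hSC
  have h1k : (1:ℝ) + (κ₁ q)^2 ≠ 0 := by positivity
  -- derivative of sec ∘ arctan ∘ κ₁
  have hsecD : HasDerivAt (fun x : ℝ => (Real.cos (Real.arctan x))⁻¹)
      (-(-Real.sin (Real.arctan (κ₁ q)) * (1/(1+(κ₁ q)^2))) / (Real.cos (Real.arctan (κ₁ q)))^2)
      (κ₁ q) := by
    have h1 : HasDerivAt (fun x : ℝ => Real.cos (Real.arctan x))
        (-Real.sin (Real.arctan (κ₁ q)) * (1/(1+(κ₁ q)^2))) (κ₁ q) :=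
      (Real.hasDerivAt_cos (Real.arctan (κ₁ q))).comp (κ₁ q) (Real.hasDerivAt_arctan (κ₁ q))
    exact h1.inv hcos.ne'
  have hsecF : HasFDerivAt (fun q' => (Real.cos (Real.arctan (κ₁ q')))⁻¹)
      ((-(-Real.sin (Real.arctan (κ₁ q)) * (1/(1+(κ₁ q)^2)))
        / (Real.cos (Real.arctan (κ₁ q)))^2) • fderiv ℝ κ₁ q) q :=
    hsecD.comp_hasFDerivAt q dκ1.hasFDerivAt
  have dsec : DifferentiableAt ℝ (fun q' => (Real.cos (Real.arctan (κ₁ q')))⁻¹) q :=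
    hsecF.differentiableAt
  have hsecval : ∀ dir, fderiv ℝ (fun q' => (Real.cos (Real.arctan (κ₁ q')))⁻¹) q dir
      = Real.sin (Real.arctan (κ₁ q)) * fderiv ℝ κ₁ q dir := by
    intro dir
    rw [hsecF.fderiv]
    simp only [ContinuousLinearMap.smul_apply, smul_eq_mul]
    field_simp
    linear_combination (-fderiv ℝ κ₁ q dir) * hC2
  -- derivative of csc ∘ arctan ∘ κ₁
  have hcscD : HasDerivAt (fun x : ℝ => (Real.sin (Real.arctan x))⁻¹)
      (-(Real.cos (Real.arctan (κ₁ q)) * (1/(1+(κ₁ q)^2))) / (Real.sin (Real.arctan (κ₁ q)))^2)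
      (κ₁ q) := by
    have h1 : HasDerivAt (fun x : ℝ => Real.sin (Real.arctan x))
        (Real.cos (Real.arctan (κ₁ q)) * (1/(1+(κ₁ q)^2))) (κ₁ q) :=
      (Real.hasDerivAt_sin (Real.arctan (κ₁ q))).comp (κ₁ q) (Real.hasDerivAt_arctan (κ₁ q))
    exact h1.inv hsin.ne'
  have hcscF : HasFDerivAt (fun q' => (Real.sin (Real.arctan (κ₁ q')))⁻¹)
      ((-(Real.cos (Real.arctan (κ₁ q)) * (1/(1+(κ₁ q)^2)))
        / (Real.sin (Real.arctan (κ₁ q)))^2) • fderiv ℝ κ₁ q) q :=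
    hcscD.comp_hasFDerivAt q dκ1.hasFDerivAt
  have dcsc : DifferentiableAt ℝ (fun q' => (Real.sin (Real.arctan (κ₁ q')))⁻¹) q :=
    hcscF.differentiableAt
  have hcscval : ∀ dir, fderiv ℝ (fun q' => (Real.sin (Real.arctan (κ₁ q')))⁻¹) q dir
      = -((Real.cos (Real.arctan (κ₁ q)))^3/(Real.sin (Real.arctan (κ₁ q)))^2)
          * fderiv ℝ κ₁ q dir := by
    intro dir
    rw [hcscF.fderiv]
    simp only [ContinuousLinearMap.smul_apply, smul_eq_mul]
    field_simp
    linear_combination (fderiv ℝ κ₁ q dir) * hC2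
  -- derivative of the η-type forms
  have hηd : ∀ (ε : ℝ) (u dir : EuclideanSpace ℝ (Fin 2)),
      fderiv ℝ (fun q' => (1/2 : ℝ) * ((Real.cos (Real.arctan (κ₁ q')))⁻¹
          * ⟪fderiv ℝ X q' u, e₁ q'⟫
        + ε * ((Real.sin (Real.arctan (κ₁ q')))⁻¹ * ⟪fderiv ℝ X q' u, e₂ q'⟫))) q dir
      = (1/2 : ℝ) * (((Real.cos (Real.arctan (κ₁ q)))⁻¹
            * fderiv ℝ (fun q' => ⟪fderiv ℝ X q' u, e₁ q'⟫) q dir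
          + ⟪fderiv ℝ X q u, e₁ q⟫
            * fderiv ℝ (fun q' => (Real.cos (Real.arctan (κ₁ q')))⁻¹) q dir)
        + ε * ((Real.sin (Real.arctan (κ₁ q)))⁻¹
            * fderiv ℝ (fun q' => ⟪fderiv ℝ X q' u, e₂ q'⟫) q dir
          + ⟪fderiv ℝ X q u, e₂ q⟫
            * fderiv ℝ (fun q' => (Real.sin (Real.arctan (κ₁ q')))⁻¹) q dir)) := by
    intro ε u dir
    rw [fderiv_const_mul ((dsec.fun_mul (dθ1 u)).fun_add ((dcsc.fun_mul (dθ2 u)).const_mul ε)) (1/2 : ℝ)]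
    rw [fderiv_fun_add (dsec.fun_mul (dθ1 u)) ((dcsc.fun_mul (dθ2 u)).const_mul ε)]
    rw [fderiv_fun_mul dsec (dθ1 u), fderiv_const_mul (dcsc.fun_mul (dθ2 u)) ε,
      fderiv_fun_mul dcsc (dθ2 u)]
    simp only [ContinuousLinearMap.add_apply, ContinuousLinearMap.smul_apply, smul_eq_mul]
    try ring
  -- the main computation
  have main : ∀ ε : ℝ,
      fderiv ℝ (fun q' => (1/2 : ℝ) * ((Real.cos (Real.arctan (κ₁ q')))⁻¹
          * ⟪fderiv ℝ X q' w, e₁ q'⟫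
        + ε * ((Real.sin (Real.arctan (κ₁ q')))⁻¹ * ⟪fderiv ℝ X q' w, e₂ q'⟫))) q v
      = fderiv ℝ (fun q' => (1/2 : ℝ) * ((Real.cos (Real.arctan (κ₁ q')))⁻¹
          * ⟪fderiv ℝ X q' v, e₁ q'⟫
        + ε * ((Real.sin (Real.arctan (κ₁ q')))⁻¹ * ⟪fderiv ℝ X q' v, e₂ q'⟫))) q w := by
    intro ε
    rw [hηd ε w v, hηd ε v w, hsecval v, hsecval w, hcscval v, hcscval w]
    exact key_algebra ε (κ₁ q) (κ₂ q)
      (Real.cos (Real.arctan (κ₁ q))) (Real.sin (Real.arctan (κ₁ q)))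
      (fderiv ℝ κ₁ q v) (fderiv ℝ κ₁ q w)
      ⟪fderiv ℝ X q v, e₁ q⟫ ⟪fderiv ℝ X q w, e₁ q⟫
      ⟪fderiv ℝ X q v, e₂ q⟫ ⟪fderiv ℝ X q w, e₂ q⟫
      ⟪e₂ q, fderiv ℝ e₁ q v⟫ ⟪e₂ q, fderiv ℝ e₁ q w⟫
      (fderiv ℝ (fun q' => ⟪fderiv ℝ X q' w, e₁ q'⟫) q v)
      (fderiv ℝ (fun q' => ⟪fderiv ℝ X q' v, e₁ q'⟫) q w)
      (fderiv ℝ (fun q' => ⟪fderiv ℝ X q' w, e₂ q'⟫) q v)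
      (fderiv ℝ (fun q' => ⟪fderiv ℝ X q' v, e₂ q'⟫) q w)
      hcos hsin hSC hC2 (hK q hq) hX1 hX2 hA hB
  constructor
  · have hfw : (fun q' => η₁ q' w) = (fun q' => (1/2 : ℝ)
        * ((Real.cos (Real.arctan (κ₁ q')))⁻¹ * ⟪fderiv ℝ X q' w, e₁ q'⟫
          + (-1 : ℝ) * ((Real.sin (Real.arctan (κ₁ q')))⁻¹ * ⟪fderiv ℝ X q' w, e₂ q'⟫))) :=
      funext fun q' => by rw [hη₁ q' w, hα q']; ring
    have hfv : (fun q' => η₁ q' v) = (fun q' => (1/2 : ℝ)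
        * ((Real.cos (Real.arctan (κ₁ q')))⁻¹ * ⟪fderiv ℝ X q' v, e₁ q'⟫
          + (-1 : ℝ) * ((Real.sin (Real.arctan (κ₁ q')))⁻¹ * ⟪fderiv ℝ X q' v, e₂ q'⟫))) :=
      funext fun q' => by rw [hη₁ q' v, hα q']; ring
    rw [hfw, hfv]
    exact main (-1)
  · have hfw : (fun q' => η₂ q' w) = (fun q' => (1/2 : ℝ)
        * ((Real.cos (Real.arctan (κ₁ q')))⁻¹ * ⟪fderiv ℝ X q' w, e₁ q'⟫
          + (1 : ℝ) * ((Real.sin (Real.arctan (κ₁ q')))⁻¹ * ⟪fderiv ℝ X q' w, e₂ q'⟫))) :=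
      funext fun q' => by rw [hη₂ q' w, hα q']; ring
    have hfv : (fun q' => η₂ q' v) = (fun q' => (1/2 : ℝ)
        * ((Real.cos (Real.arctan (κ₁ q')))⁻¹ * ⟪fderiv ℝ X q' v, e₁ q'⟫
          + (1 : ℝ) * ((Real.sin (Real.arctan (κ₁ q')))⁻¹ * ⟪fderiv ℝ X q' v, e₂ q'⟫))) :=
      funext fun q' => by rw [hη₂ q' v, hα q']; ring
    rw [hfw, hfv]
    exact main 1
end

section
/- Global flow for unit-hyperbolic-length vector fields: let D = {p ∈ ℝ² : ‖p‖ < 1} be the open unit disc and let v : ℝ² → ℝ² be C^∞ on D with ‖v(p)‖ = (1 − ‖p‖²)/2 for every p ∈ D (i.e., v has unit length in the hyperbolic metric). Then for every p₀ ∈ D there exists a curve γ : ℝ → ℝ² with γ(t) ∈ D for all t ∈ ℝ, γ(0) = p₀, and for every t ∈ ℝ, γ has derivative v(γ(t)) at t. In other words, every maximal integral curve of v is defined for all time. -/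
open Set Metric Real Filter
open scoped RealInnerProductSpace Topology NNReal

local notation "E" => EuclideanSpace ℝ (Fin 2)

/-- Cutoff extension: a globally Lipschitz field agreeing with `v` on a ball. -/
lemma hyp_cutoff (v : E → E) (hv : ContDiffOn ℝ (⊤ : ℕ∞) v {p : E | ‖p‖ < 1})
    (hlen : ∀ p : E, ‖p‖ < 1 → ‖v p‖ = (1 - ‖p‖ ^ 2) / 2)
    (r : ℝ) (hr0 : 0 ≤ r) (hr1 : r < 1) :
    ∃ (w : E → E) (K : ℝ≥0) (r' : ℝ), LipschitzWith K w ∧ r < r' ∧ r' < 1 ∧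
      (∀ p : E, ‖p‖ ≤ r → w p = v p) ∧
      (∀ p : E, ‖p‖ < 1 → ‖w p‖ ≤ (1 - ‖p‖ ^ 2) / 2) ∧
      (∀ p : E, r' ≤ ‖p‖ → w p = 0) := by
  have hball : {p : E | ‖p‖ < 1} = Metric.ball 0 1 := by
    ext p; simp [mem_ball_iff_norm]
  have hopen : IsOpen {p : E | ‖p‖ < 1} := by rw [hball]; exact isOpen_ball
  set χ : ContDiffBump (0 : E) := ⟨(r+1)/2, (r+3)/4, by linarith, by linarith⟩ with hχ
  set w : E → E := fun p => χ p • v p with hw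
  have hχ1 : ∀ p : E, ‖p‖ ≤ (r+1)/2 → χ p = 1 := by
    intro p hp
    exact χ.one_of_mem_closedBall (by simpa [mem_closedBall_iff_norm] using hp)
  have hχ0 : ∀ p : E, (r+3)/4 ≤ ‖p‖ → χ p = 0 := by
    intro p hp
    exact χ.zero_of_le_dist (by simpa [dist_zero_right] using hp)
  have hzero : ∀ p : E, (r+3)/4 ≤ ‖p‖ → w p = 0 := by
    intro p hp; simp [hw, hχ0 p hp]
  -- smoothness of w
  have hcd : ContDiff ℝ 1 w := by
    rw [contDiff_iff_contDiffAt]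
    intro p
    by_cases hp : ‖p‖ < 1
    · have h1 : ContDiffOn ℝ 1 w {q : E | ‖q‖ < 1} :=
        (χ.contDiff.contDiffOn).smul (hv.of_le (by simp))
      exact h1.contDiffAt (hopen.mem_nhds hp)
    · have hopen2 : IsOpen {q : E | (r+3)/4 < ‖q‖} :=
        isOpen_lt continuous_const continuous_norm
      have hmem : p ∈ {q : E | (r+3)/4 < ‖q‖} := by
        have : (1:ℝ) ≤ ‖p‖ := not_lt.mp hp
        simp only [mem_setOf_eq]; linarith
      have hev : w =ᶠ[nhds p] (fun _ => (0:E)) := by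
        filter_upwards [hopen2.mem_nhds hmem] with q hq
        exact hzero q (le_of_lt hq)
      exact (contDiffAt_const (c := (0:E))).congr_of_eventuallyEq hev
  -- compact support
  have hsupp : HasCompactSupport w := by
    exact HasCompactSupport.intro (isCompact_closedBall (0:E) ((r+3)/4)) (fun p hp => hzero p
      (by simp only [mem_closedBall_iff_norm, sub_zero, not_le] at hp; linarith))
  -- Lipschitz
  have hfc : Continuous fun p : E => ‖fderiv ℝ w p‖ :=
    (hcd.continuous_fderiv one_ne_zero).norm
  obtain ⟨pm, hpm⟩ := hfc.exists_forall_ge_of_hasCompactSupport (hsupp.fderiv ℝ).norm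
  have hlip : LipschitzWith ‖fderiv ℝ w pm‖₊ w := by
    apply lipschitzWith_of_nnnorm_fderiv_le (hcd.differentiable one_ne_zero)
    intro x
    rw [← NNReal.coe_le_coe]
    simpa using hpm x
  refine ⟨w, ‖fderiv ℝ w pm‖₊, (r+3)/4, hlip, by linarith, by linarith, ?_, ?_, hzero⟩
  · intro p hp
    have : χ p = 1 := hχ1 p (by linarith)
    simp [hw, this]
  · intro p hp
    have hvp : ‖v p‖ = (1 - ‖p‖ ^ 2) / 2 := hlen p hp
    have : ‖w p‖ = |χ p| * ‖v p‖ := by rw [hw]; simp [norm_smul]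
    rw [this, abs_of_nonneg χ.nonneg, ← hvp]
    exact mul_le_of_le_one_left (norm_nonneg _) χ.le_one

/-- Local-in-time solution with a priori bound. -/
lemma hyp_local_sol (v : E → E) (hv : ContDiffOn ℝ (⊤ : ℕ∞) v {p : E | ‖p‖ < 1})
    (hlen : ∀ p : E, ‖p‖ < 1 → ‖v p‖ = (1 - ‖p‖ ^ 2) / 2)
    (p₀ : E) (h₀ : ‖p₀‖ < 1) (n : ℕ) :
    ∃ γ : ℝ → E, γ 0 = p₀ ∧ ∀ t ∈ Ioo (-(n:ℝ)) (n:ℝ),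
      ‖γ t‖ ^ 2 ≤ 1 - (1 - ‖p₀‖ ^ 2) * Real.exp (-(n:ℝ)) ∧
      HasDerivAt γ (v (γ t)) t := by
  set u0 : ℝ := 1 - ‖p₀‖ ^ 2 with hu0def
  have hu0 : 0 < u0 := by nlinarith [norm_nonneg p₀]
  have hu1 : u0 ≤ 1 := by nlinarith [norm_nonneg p₀]
  set b : ℝ := 1 - u0 * Real.exp (-(n:ℝ)) with hbdef
  have hexp1 : Real.exp (-(n:ℝ)) ≤ 1 := by
    rw [← Real.exp_zero]; exact Real.exp_le_exp.mpr (neg_nonpos.mpr (Nat.cast_nonneg _))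
  have hexp0 : 0 < Real.exp (-(n:ℝ)) := Real.exp_pos _
  have hb0 : 0 ≤ b := by nlinarith
  have hb1 : b < 1 := by nlinarith
  have hp₀b : ‖p₀‖ ^ 2 ≤ b := by nlinarith
  set r : ℝ := Real.sqrt b with hrdef
  have hr0 : 0 ≤ r := Real.sqrt_nonneg b
  have hr1 : r < 1 := by nlinarith [Real.sq_sqrt hb0, Real.sqrt_nonneg b]
  have hrsq : r ^ 2 = b := Real.sq_sqrt hb0
  obtain ⟨w, K, r', hK, hrr', hr'1, heqv, hwb, hw0⟩ := hyp_cutoff v hv hlen r hr0 hr1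
  -- global bound on w
  have hwhalf : ∀ p : E, ‖w p‖ ≤ 1/2 := by
    intro p
    by_cases hp : ‖p‖ < 1
    · have := hwb p hp; nlinarith [norm_nonneg p, sq_nonneg (‖p‖)]
    · rw [hw0 p (by linarith [not_lt.mp hp])]; simp
  set T : ℝ := (n:ℝ) + 1 with hTdef
  have hT0 : 0 < T := by positivity
  -- Picard–Lindelöf on [-T, T]
  have hpl : IsPicardLindelof (fun _ x => w x) (tmin := -T) (tmax := T)
      ⟨0, by constructor <;> linarith⟩ p₀ T.toNNReal 0 (1/2) K :=
    { lipschitzOnWith := fun t _ => hK.lipschitzOnWith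
      continuousOn := fun x _ => continuousOn_const
      norm_le := fun t _ x _ => by simpa using hwhalf x
      mul_max_le := by
        simp only [NNReal.coe_zero, sub_zero, zero_sub, neg_neg, max_self,
          Real.coe_toNNReal _ hT0.le]
        norm_num; linarith }
  obtain ⟨f, hf0', hfderiv⟩ := IsPicardLindelof.exists_eq_forall_mem_Icc_hasDerivWithinAt₀ hpl
  have hf0 : f 0 = p₀ := hf0'
  have hf' : ∀ t ∈ Ioo (-T) T, HasDerivAt f (w (f t)) t := fun t ht =>
    (hfderiv t (Ioo_subset_Icc_self ht)).hasDerivAt (Icc_mem_nhds ht.1 ht.2)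
  have h0mem : (0:ℝ) ∈ Ioo (-T) T := by constructor <;> linarith
  -- the solution never reaches norm r'
  have hlt : ∀ t ∈ Ioo (-T) T, ‖f t‖ < r' := by
    by_contra hcon
    push_neg at hcon
    obtain ⟨t₁, ht₁, ht₁'⟩ := hcon
    have hw0' : w (f t₁) = 0 := hw0 _ ht₁'
    have huniq := ODE_solution_unique_of_mem_Ioo
      (v := fun _ x => w x) (s := fun _ => univ) (K := K)
      (fun _ _ => hK.lipschitzOnWith) ht₁
      (fun t ht => ⟨hf' t ht, mem_univ _⟩)
      (g := fun _ => f t₁)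
      (fun t _ => ⟨by simpa [hw0'] using hasDerivAt_const t (f t₁), mem_univ _⟩)
      rfl
    have : f 0 = f t₁ := huniq h0mem
    have hnp : ‖p₀‖ ≤ r := (Real.le_sqrt (norm_nonneg p₀) hb0).mpr hp₀b
    rw [hf0] at this
    rw [← this] at ht₁'
    linarith
  -- Gronwall-type estimate
  set h : ℝ → ℝ := fun t => ⟪f t, f t⟫ with hhdef
  have hinner : ∀ t ∈ Ioo (-T) T,
      HasDerivAt h (⟪f t, w (f t)⟫ + ⟪w (f t), f t⟫) t := fun t ht =>
    (hf' t ht).inner ℝ (hf' t ht)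
  have hhval : ∀ t, h t = ‖f t‖ ^ 2 := fun t => real_inner_self_eq_norm_sq (f t)
  have hderivbound : ∀ t ∈ Ioo (-T) T, |⟪f t, w (f t)⟫ + ⟪w (f t), f t⟫| ≤ 1 - h t := by
    intro t ht
    have hn1 : ‖f t‖ < 1 := lt_trans (hlt t ht) hr'1
    have habs : |⟪f t, w (f t)⟫| ≤ ‖f t‖ * ‖w (f t)‖ := abs_real_inner_le_norm _ _
    have habs2 : |⟪w (f t), f t⟫| ≤ ‖f t‖ * ‖w (f t)‖ := by
      rw [real_inner_comm]; exact habs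
    have hwle : ‖w (f t)‖ ≤ (1 - ‖f t‖ ^ 2) / 2 := hwb _ hn1
    have htri := abs_add_le (⟪f t, w (f t)⟫) (⟪w (f t), f t⟫)
    have hfn0 : 0 ≤ ‖f t‖ := norm_nonneg _
    have h1h : 0 ≤ 1 - ‖f t‖ ^ 2 := by nlinarith
    have hA : ‖f t‖ * ‖w (f t)‖ ≤ (1 - ‖f t‖ ^ 2) / 2 := by
      calc ‖f t‖ * ‖w (f t)‖ ≤ ‖f t‖ * ((1 - ‖f t‖ ^ 2) / 2) :=
            mul_le_mul_of_nonneg_left hwle hfn0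
        _ ≤ 1 * ((1 - ‖f t‖ ^ 2) / 2) := mul_le_mul_of_nonneg_right hn1.le (by linarith)
        _ = (1 - ‖f t‖ ^ 2) / 2 := one_mul _
    rw [hhval t]
    linarith
  -- φ and ψ monotone
  set φ : ℝ → ℝ := fun t => (1 - h t) * Real.exp t with hφdef
  set ψ : ℝ → ℝ := fun t => (1 - h t) * Real.exp (-t) with hψdef
  have hφderiv : ∀ t ∈ Ioo (-T) T, HasDerivAt φ
      ((-(⟪f t, w (f t)⟫ + ⟪w (f t), f t⟫)) * Real.exp t + (1 - h t) * Real.exp t) t := by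
    intro t ht
    exact (((hasDerivAt_const t (1:ℝ)).sub (hinner t ht)).mul (Real.hasDerivAt_exp t)).congr_deriv
      (by simp only [Pi.sub_apply]; ring)
  have hψderiv : ∀ t ∈ Ioo (-T) T, HasDerivAt ψ
      ((-(⟪f t, w (f t)⟫ + ⟪w (f t), f t⟫)) * Real.exp (-t) + (1 - h t) * (-Real.exp (-t))) t := by
    intro t ht
    have he : HasDerivAt (fun s => Real.exp (-s)) (-Real.exp (-t)) t := by
      exact ((Real.hasDerivAt_exp (-t)).comp t ((hasDerivAt_id t).neg)).congr_deriv (by simp)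
    exact (((hasDerivAt_const t (1:ℝ)).sub (hinner t ht)).mul he).congr_deriv (by simp only [Pi.sub_apply]; ring)
  have hconv : Convex ℝ (Ioo (-T) T) := convex_Ioo _ _
  have hint : interior (Ioo (-T) T) = Ioo (-T) T := isOpen_Ioo.interior_eq
  have hφmono : MonotoneOn φ (Ioo (-T) T) := by
    apply monotoneOn_of_hasDerivWithinAt_nonneg hconv
      (fun t ht => (hφderiv t ht).continuousAt.continuousWithinAt)
      (f' := fun t => (-(⟪f t, w (f t)⟫ + ⟪w (f t), f t⟫)) * Real.exp t + (1 - h t) * Real.exp t)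
      (fun t ht => ((hφderiv t (hint ▸ ht)).hasDerivWithinAt))
    intro t ht
    rw [hint] at ht
    have hdb := hderivbound t ht
    have he := Real.exp_pos t
    rw [abs_le] at hdb
    nlinarith
  have hψanti : AntitoneOn ψ (Ioo (-T) T) := by
    apply antitoneOn_of_hasDerivWithinAt_nonpos hconv
      (fun t ht => (hψderiv t ht).continuousAt.continuousWithinAt)
      (f' := fun t => (-(⟪f t, w (f t)⟫ + ⟪w (f t), f t⟫)) * Real.exp (-t)
        + (1 - h t) * (-Real.exp (-t)))
      (fun t ht => ((hψderiv t (hint ▸ ht)).hasDerivWithinAt))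
    intro t ht
    rw [hint] at ht
    have hdb := hderivbound t ht
    have he := Real.exp_pos (-t)
    rw [abs_le] at hdb
    nlinarith
  have hh0 : h 0 = ‖p₀‖ ^ 2 := by rw [hhval, hf0]
  -- the a priori bound on Ioo (-n) n
  have hbound : ∀ t ∈ Ioo (-(n:ℝ)) (n:ℝ), ‖f t‖ ^ 2 ≤ b := by
    intro t ht
    have htT : t ∈ Ioo (-T) T := ⟨by linarith [ht.1], by linarith [ht.2]⟩
    rcases le_total 0 t with hsgn | hsgn
    · have := hφmono h0mem htT hsgn
      have hφ0 : φ 0 = u0 := by simp [hφdef, hh0, hu0def]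
      rw [hφ0] at this
      -- u0 ≤ (1 - h t) * exp t
      have h2 : u0 * Real.exp (-t) ≤ 1 - h t := by
        have h3 := mul_le_mul_of_nonneg_right this (Real.exp_pos (-t)).le
        rwa [hφdef, mul_assoc, ← Real.exp_add, add_neg_cancel, Real.exp_zero, mul_one] at h3
      have h4 : u0 * Real.exp (-(n:ℝ)) ≤ u0 * Real.exp (-t) :=
        mul_le_mul_of_nonneg_left (Real.exp_le_exp.mpr (by linarith [ht.2])) hu0.le
      rw [← hhval]; simp only [hbdef]; linarith
    · have := hψanti htT h0mem hsgn
      have hψ0 : ψ 0 = u0 := by simp [hψdef, hh0, hu0def]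
      rw [hψ0] at this
      have h2 : u0 * Real.exp t ≤ 1 - h t := by
        have h3 := mul_le_mul_of_nonneg_right this (Real.exp_pos t).le
        rwa [hψdef, mul_assoc, ← Real.exp_add, neg_add_cancel, Real.exp_zero, mul_one] at h3
      have h4 : u0 * Real.exp (-(n:ℝ)) ≤ u0 * Real.exp t :=
        mul_le_mul_of_nonneg_left (Real.exp_le_exp.mpr (by linarith [ht.1])) hu0.le
      rw [← hhval]; simp only [hbdef]; linarith
  refine ⟨f, hf0, fun t ht => ⟨hbound t ht, ?_⟩⟩
  have htT : t ∈ Ioo (-T) T := ⟨by linarith [ht.1], by linarith [ht.2]⟩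
  have hfr : ‖f t‖ ≤ r := (Real.le_sqrt (norm_nonneg _) hb0).mpr (hbound t ht)
  rw [← heqv (f t) hfr]
  exact hf' t htT

/-- **Global flow for unit-hyperbolic-length vector fields** on the Poincaré disc:
if `v` is `C^∞` on the open unit disc `D` and has hyperbolic unit length
(`‖v p‖ = (1 - ‖p‖²)/2` in the Euclidean norm), then every integral curve of `v`
is defined for all time. -/
theorem global_flow_of_unit_hyperbolic_vector_field
    (v : EuclideanSpace ℝ (Fin 2) → EuclideanSpace ℝ (Fin 2))
    (hv : ContDiffOn ℝ (⊤ : ℕ∞) v {p : EuclideanSpace ℝ (Fin 2) | ‖p‖ < 1})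
    (hlen : ∀ p : EuclideanSpace ℝ (Fin 2), ‖p‖ < 1 → ‖v p‖ = (1 - ‖p‖ ^ 2) / 2) :
    ∀ p₀ : EuclideanSpace ℝ (Fin 2), ‖p₀‖ < 1 →
      ∃ γ : ℝ → EuclideanSpace ℝ (Fin 2),
        (∀ t : ℝ, ‖γ t‖ < 1) ∧ γ 0 = p₀ ∧
        ∀ t : ℝ, HasDerivAt γ (v (γ t)) t := by
  intro p₀ h₀
  set u0 : ℝ := 1 - ‖p₀‖ ^ 2 with hu0def
  have hu0 : 0 < u0 := by nlinarith [norm_nonneg p₀]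
  set sol : ℕ → ℝ → E := fun n => Classical.choose (hyp_local_sol v hv hlen p₀ h₀ n) with hsoldef
  have hsol : ∀ n : ℕ, sol n 0 = p₀ ∧ ∀ t ∈ Ioo (-(n:ℝ)) (n:ℝ),
      ‖sol n t‖ ^ 2 ≤ 1 - u0 * Real.exp (-(n:ℝ)) ∧ HasDerivAt (sol n) (v (sol n t)) t :=
    fun n => Classical.choose_spec (hyp_local_sol v hv hlen p₀ h₀ n)
  -- consistency
  have hcons : ∀ (N n : ℕ), n ≤ N → EqOn (sol n) (sol N) (Ioo (-(n:ℝ)) (n:ℝ)) := by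
    intro N n hnN
    rcases Nat.eq_zero_or_pos n with rfl | hn1
    · intro t ht; simp only [Nat.cast_zero, neg_zero] at ht
      exact absurd ht (by simp [Ioo_self])
    have hexp1 : Real.exp (-(N:ℝ)) ≤ 1 := by
      rw [← Real.exp_zero]; exact Real.exp_le_exp.mpr (neg_nonpos.mpr (Nat.cast_nonneg _))
    have hu1 : u0 ≤ 1 := by nlinarith [norm_nonneg p₀]
    set b : ℝ := 1 - u0 * Real.exp (-(N:ℝ)) with hbdef
    have hexp0 : 0 < Real.exp (-(N:ℝ)) := Real.exp_pos _
    have hb0 : 0 ≤ b := by nlinarith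
    have hb1 : b < 1 := by nlinarith
    set r : ℝ := Real.sqrt b with hrdef
    have hrsq : r ^ 2 = b := Real.sq_sqrt hb0
    obtain ⟨w, K, r', hK, hrr', hr'1, heqv, hwb, hw0⟩ :=
      hyp_cutoff v hv hlen r (Real.sqrt_nonneg b)
        (by nlinarith [Real.sq_sqrt hb0, Real.sqrt_nonneg b])
    have hmono : ∀ m : ℕ, m ≤ N → ∀ t ∈ Ioo (-(m:ℝ)) (m:ℝ), ‖sol m t‖ ≤ r := by
      intro m hm t ht
      have h1 := ((hsol m).2 t ht).1
      have h2 : Real.exp (-(m:ℝ)) ≥ Real.exp (-(N:ℝ)) := by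
        apply Real.exp_le_exp.mpr; simp only [neg_le_neg_iff, Nat.cast_le]; exact hm
      have : ‖sol m t‖ ^ 2 ≤ b := by
        rw [hbdef]; nlinarith
      exact (Real.le_sqrt (norm_nonneg _) hb0).mpr this
    have h0mem : (0:ℝ) ∈ Ioo (-(n:ℝ)) (n:ℝ) := by
      have hnr : (0:ℝ) < (n:ℝ) := by exact_mod_cast hn1
      constructor <;> linarith
    apply ODE_solution_unique_of_mem_Ioo
      (v := fun _ x => w x) (s := fun _ => univ) (K := K)
      (fun _ _ => hK.lipschitzOnWith) h0mem
    · intro t ht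
      refine ⟨?_, mem_univ _⟩
      rw [heqv _ (hmono n hnN t ht)]
      exact ((hsol n).2 t ht).2
    · intro t ht
      have htN : t ∈ Ioo (-(N:ℝ)) (N:ℝ) := by
        have hc : (n:ℝ) ≤ (N:ℝ) := by exact_mod_cast hnN
        exact ⟨by linarith [ht.1], by linarith [ht.2]⟩
      refine ⟨?_, mem_univ _⟩
      rw [heqv _ (hmono N le_rfl t htN)]
      exact ((hsol N).2 t htN).2
    · rw [(hsol n).1, (hsol N).1]
  -- definition of γ and key coherence
  set γ : ℝ → E := fun t => sol (⌊|t|⌋₊ + 1) t with hγdef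
  have hkey : ∀ (N : ℕ) (t : ℝ), |t| < N → γ t = sol N t := by
    intro N t hlt
    set m : ℕ := ⌊|t|⌋₊ + 1 with hmdef
    have htm : t ∈ Ioo (-(m:ℝ)) (m:ℝ) := by
      have h1 : |t| < (m:ℝ) := by
        have := Nat.lt_floor_add_one |t|
        push_cast [hmdef]; linarith
      exact abs_lt.mp h1
    have htN : t ∈ Ioo (-(N:ℝ)) (N:ℝ) := abs_lt.mp hlt
    rcases le_total m N with hmN | hNm
    · exact hcons N m hmN htm
    · exact (hcons m N hNm htN).symm
  have hγ0 : γ 0 = p₀ := by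
    rw [hkey 1 0 (by simp)]
    exact (hsol 1).1
  refine ⟨γ, ?_, hγ0, ?_⟩
  · intro t
    set N : ℕ := ⌊|t|⌋₊ + 1 with hNdef
    have hlt : |t| < (N:ℝ) := by
      have := Nat.lt_floor_add_one |t|
      push_cast [hNdef]; linarith
    have h1 : γ t = sol N t := hkey N t hlt
    have h2 := ((hsol N).2 t (abs_lt.mp hlt)).1
    have hexp0 : 0 < Real.exp (-(N:ℝ)) := Real.exp_pos _
    rw [h1]
    nlinarith [norm_nonneg (sol N t)]
  · intro t
    set N : ℕ := ⌊|t|⌋₊ + 2 with hNdef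
    have hlt : |t| < (N:ℝ) := by
      have := Nat.lt_floor_add_one |t|
      push_cast [hNdef]; linarith
    have hev : γ =ᶠ[nhds t] sol N := by
      have hopen : IsOpen {s : ℝ | |s| < (N:ℝ)} := isOpen_lt (continuous_abs) continuous_const
      filter_upwards [hopen.mem_nhds hlt] with s hs
      exact hkey N s hs
    have hd := ((hsol N).2 t (abs_lt.mp hlt)).2
    have := hd.congr_of_eventuallyEq hev
    rwa [← hkey N t hlt] at this
end

section
/- Let f : X → Y be a local homeomorphism between topological spaces, where X is nonempty and path-connected and Y is simply connected. Suppose f has the unique path lifting property: for every continuous path γ : [0,1] → Y and every x₀ ∈ X with f(x₀) = γ(0), there exists exactly one continuous path γ̃ : [0,1] → X with γ̃(0) = x₀ and f ∘ γ̃ = γ. Then f is a homeomorphism of X onto Y. -/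
/-!
Lifting paths from a base point shows that `f` is surjective. For injectivity, join two points
of a fibre by a path `q`; its image is a loop, which contracts to the constant loop. Lifting every
stage of the contraction from the start of `q` gives a homotopy whose continuity follows from the
local homeomorphism property and the uniqueness of lifts. Its endpoint then moves continuously
inside a discrete fibre, so it is constant: the endpoint of `q` equals the endpoint of the
constant lift, i.e. the start of `q`. A continuous open bijection is a homeomorphism.
-/

open Function Topology unitInterval

section

variable {E X A : Type*} [TopologicalSpace E] [TopologicalSpace X] [TopologicalSpace A]
  {p : E → X}

def HasUniquePathLifting (p : E → X) : Prop :=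
  ∀ γ : I → X, Continuous γ → ∀ e₀ : E, p e₀ = γ 0 →
    ∃! Γ : I → E, Continuous Γ ∧ Γ 0 = e₀ ∧ p ∘ Γ = γ

omit [TopologicalSpace X] in
theorem IsLocallyInjective.isLocallyConstant_of_comp (inj : IsLocallyInjective p) {g : A → E}
    (hg : Continuous g) (he : ∀ a a', p (g a) = p (g a')) : IsLocallyConstant g :=
  (IsLocallyConstant.iff_exists_open g).2 fun a ↦
    ⟨_, inj.isOpen_eqLocus hg continuous_const (funext fun a' ↦ he a' a), rfl, fun _ h ↦ h⟩

namespace HasUniquePathLifting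

variable (hu : HasUniquePathLifting p)
include hu

theorem eq_of_comp_eq (hp : Continuous p) {Γ₁ Γ₂ : I → E} (h₁ : Continuous Γ₁)
    (h₂ : Continuous Γ₂) (he : p ∘ Γ₁ = p ∘ Γ₂) (h0 : Γ₁ 0 = Γ₂ 0) : Γ₁ = Γ₂ :=
  (hu _ (hp.comp h₁) _ rfl).unique ⟨h₁, rfl, rfl⟩ ⟨h₂, h0.symm, he.symm⟩

theorem surjective [Nonempty E] [PathConnectedSpace X] : Surjective p := fun x ↦ by
  let e₀ : E := Classical.arbitrary E
  let γ := PathConnectedSpace.somePath (p e₀) x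
  obtain ⟨Γ, -, -, hΓ⟩ := (hu γ γ.continuous e₀ γ.source.symm).exists
  exact ⟨Γ 1, congr_fun hΓ 1 |>.trans γ.target⟩

variable (homeo : IsLocalHomeomorph p)
include homeo

/-- `IsLocalHomeomorph.continuous_lift` needs a separated map only to identify the local lift
produced by `IsLocalHomeomorph.exists_lift_nhds` with `g`; uniqueness of path lifts does that
here. -/
theorem continuous_lift {f : C(I × A, X)} {g : I × A → E} (g_lifts : p ∘ g = f)
    (cont_0 : Continuous (g ⟨0, ·⟩)) (cont_A : ∀ a, Continuous (g ⟨·, a⟩)) : Continuous g := by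
  refine continuous_iff_continuousAt.2 fun ⟨t, a⟩ ↦ ?_
  obtain ⟨N, hN, g', hg', g'_lifts, g'_0, -⟩ :=
    homeo.exists_lift_nhds g_lifts cont_0 a (cont_A a)
  have hUN : Set.univ ×ˢ N ∈ 𝓝 (t, a) := prod_mem_nhds Filter.univ_mem hN
  have agree : ∀ a' ∈ N, (g' ⟨·, a'⟩) = (g ⟨·, a'⟩) := fun a' ha' ↦
    hu.eq_of_comp_eq homeo.continuous
      (hg'.comp_continuous (.prodMk_left a') fun _ ↦ ⟨trivial, ha'⟩) (cont_A a')
      (funext fun s ↦ congr_fun (g'_lifts.trans g_lifts.symm) (s, a')) (g'_0 a')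
  exact (hg'.continuousAt hUN).congr <|
    Filter.mem_of_superset hUN fun ⟨s, a'⟩ ⟨_, ha'⟩ ↦ congr_fun (agree a' ha') s

theorem monodromy {γ₀ γ₁ : C(I, X)} (γ : γ₀.HomotopyRel γ₁ {0, 1}) {Γ : I → I → E}
    (Γ_cont : ∀ t, Continuous (Γ t)) (Γ_lifts : ∀ t, p ∘ Γ t = fun s ↦ γ (t, s))
    (Γ_0 : ∀ t, Γ t 0 = Γ 0 0) (t : I) : Γ t 1 = Γ 0 1 := by
  have joint : Continuous fun st : I × I ↦ Γ st.2 st.1 :=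
    hu.continuous_lift homeo (f := γ.toContinuousMap.comp .prodSwap)
      (funext fun st ↦ congr_fun (Γ_lifts st.2) st.1)
      (by simp_rw [Γ_0]; exact continuous_const) Γ_cont
  have endpoint_fibre : ∀ t t', p (Γ t 1) = p (Γ t' 1) := fun t t' ↦ by
    simp only [← comp_apply (f := p), Γ_lifts, γ.eq_fst _ (.inr rfl)]
  exact (homeo.isLocallyInjective.isLocallyConstant_of_comp (joint.comp (.prodMk_right 1))
    endpoint_fibre).apply_eq_of_preconnectedSpace t 0

theorem injective [PathConnectedSpace E] [SimplyConnectedSpace X] : Injective p := by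
  intro b c hbc
  let q := PathConnectedSpace.somePath b c
  obtain ⟨F⟩ := SimplyConnectedSpace.paths_homotopic
    ((q.map homeo.continuous).cast rfl hbc) (Path.refl (p b))
  choose Γ Γ_cont Γ_0 Γ_lifts using fun t ↦
    (hu (fun s ↦ F (t, s)) (by fun_prop) b (F.source t).symm).exists
  have Γ_start : Γ 0 = q := hu.eq_of_comp_eq homeo.continuous (Γ_cont 0) q.continuous
    (by rw [Γ_lifts]; ext s; simp) ((Γ_0 0).trans q.source.symm)
  have Γ_end : Γ 1 = fun _ ↦ b := hu.eq_of_comp_eq homeo.continuous (Γ_cont 1)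
    continuous_const (by rw [Γ_lifts]; ext s; simp) (Γ_0 1)
  calc b = Γ 1 1 := by rw [Γ_end]
    _ = Γ 0 1 := hu.monodromy homeo F Γ_cont Γ_lifts (fun t ↦ (Γ_0 t).trans (Γ_0 0).symm) 1
    _ = c := by rw [Γ_start, q.target]

end HasUniquePathLifting

end

/-- A local homeomorphism with the unique path lifting property from a nonempty
path-connected space to a simply connected space is a homeomorphism. -/
theorem localHomeomorph_unique_path_lifting_is_homeomorph
    {X Y : Type*} [TopologicalSpace X] [TopologicalSpace Y]
    [Nonempty X] [PathConnectedSpace X] [SimplyConnectedSpace Y]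
    (f : X → Y) (hf : IsLocalHomeomorph f)
    (hlift : ∀ γ : unitInterval → Y, Continuous γ → ∀ x₀ : X, f x₀ = γ 0 →
      ∃! γl : unitInterval → X, Continuous γl ∧ γl 0 = x₀ ∧ f ∘ γl = γ) :
    ∃ h : X ≃ₜ Y, ⇑h = f := by
  have hu : HasUniquePathLifting f := hlift
  exact ⟨(Equiv.ofBijective f ⟨hu.injective hf, hu.surjective⟩).toHomeomorphOfContinuousOpen
    hf.continuous hf.isOpenMap, rfl⟩
end

section
/- Let Θ : ℝ² → ℝ be C² with 0 < Θ(x) < π for every x ∈ ℝ², and suppose Θ satisfies the sine-Gordon equation ∂²Θ/∂x¹∂x² (x) = sin(Θ(x)) for all x ∈ ℝ². Then for every a > 0, ∫_{[−a,a]×[−a,a]} sin(Θ(x¹, x²)) d(x¹, x²) = Θ(a,a) − Θ(−a,a) − Θ(a,−a) + Θ(−a,−a), and consequently this integral is strictly less than 2π for every a > 0. -/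
/-!
Along each horizontal segment the mixed derivative `∂ₛ∂ₜΘ` integrates to the difference of `∂ₜΘ`
at the endpoints, and integrating that in `t` leaves the alternating sum of `Θ` over the four
corners of the square. For the sine-Gordon equation this sum is the integral of `sin Θ`; since
`0 < Θ < π`, it is less than `Θ(a,a) + Θ(-a,-a) < 2π`.
-/

open MeasureTheory Real Set intervalIntegral

variable {E : Type*} [NormedAddCommGroup E] [NormedSpace ℝ E]

theorem HasFDerivAt.hasDerivAt_prodMk_left {f : ℝ × ℝ → E} {f' : ℝ × ℝ →L[ℝ] E} {s t : ℝ}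
    (hf : HasFDerivAt f f' (s, t)) : HasDerivAt (fun s => f (s, t)) (f' (1, 0)) s :=
  hf.comp_hasDerivAt s ((hasDerivAt_id s).prodMk (hasDerivAt_const s t))

theorem HasFDerivAt.hasDerivAt_prodMk_right {f : ℝ × ℝ → E} {f' : ℝ × ℝ →L[ℝ] E} {s t : ℝ}
    (hf : HasFDerivAt f f' (s, t)) : HasDerivAt (fun t => f (s, t)) (f' (0, 1)) t :=
  hf.comp_hasDerivAt t ((hasDerivAt_const t s).prodMk (hasDerivAt_id t))

theorem setIntegral_Icc_prod_Icc_eq_intervalIntegral {f : ℝ × ℝ → E} (hf : Continuous f)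
    {a b c d : ℝ} (hab : a ≤ b) (hcd : c ≤ d) :
    ∫ x in Icc a b ×ˢ Icc c d, f x = ∫ t in c..d, ∫ s in a..b, f (s, t) := by
  have hint : IntegrableOn (fun z => f z.swap) (Icc c d ×ˢ Icc a b) (volume.prod volume) :=
    (hf.comp continuous_swap).continuousOn.integrableOn_compact (isCompact_Icc.prod isCompact_Icc)
  rw [Measure.volume_eq_prod, ← setIntegral_prod_swap, setIntegral_prod _ hint, integral_of_le hcd,
    ← integral_Icc_eq_integral_Ioc]
  refine setIntegral_congr_fun measurableSet_Icc fun t _ => ?_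
  rw [integral_of_le hab, ← integral_Icc_eq_integral_Ioc]
  rfl

variable [CompleteSpace E]

theorem setIntegral_Icc_prod_Icc_deriv_deriv {Θ : ℝ × ℝ → E} (hΘ : ContDiff ℝ 2 Θ)
    {a b c d : ℝ} (hab : a ≤ b) (hcd : c ≤ d) :
    ∫ x in Icc a b ×ˢ Icc c d, deriv (fun s => deriv (fun t => Θ (s, t)) x.2) x.1
      = Θ (b, d) - Θ (a, d) - Θ (b, c) + Θ (a, c) := by
  set g : ℝ × ℝ → E := fun p => fderiv ℝ Θ p (0, 1)
  have hg : ContDiff ℝ 1 g := (hΘ.fderiv_right (m := 1) le_rfl).clm_apply contDiff_const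
  have hΘ_snd (s t : ℝ) : HasDerivAt (fun t => Θ (s, t)) (g (s, t)) t :=
    ((hΘ.differentiable two_ne_zero) (s, t)).hasFDerivAt.hasDerivAt_prodMk_right
  have hg_fst (s t : ℝ) : HasDerivAt (fun s => g (s, t)) (fderiv ℝ g (s, t) (1, 0)) s :=
    ((hg.differentiable one_ne_zero) (s, t)).hasFDerivAt.hasDerivAt_prodMk_left
  have hmixed : (fun x : ℝ × ℝ => deriv (fun s => deriv (fun t => Θ (s, t)) x.2) x.1)
      = fun x => fderiv ℝ g x (1, 0) := by
    ext ⟨s, t⟩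
    simp only [fun s => (hΘ_snd s t).deriv, (hg_fst s t).deriv]
  have hg_cont (s : ℝ) : Continuous fun t => g (s, t) :=
    hg.continuous.comp (continuous_const.prodMk continuous_id)
  have hg'_cont : Continuous fun x => fderiv ℝ g x (1, 0) :=
    (hg.continuous_fderiv one_ne_zero).clm_apply continuous_const
  rw [hmixed, setIntegral_Icc_prod_Icc_eq_intervalIntegral hg'_cont hab hcd]
  calc ∫ t in c..d, ∫ s in a..b, fderiv ℝ g (s, t) (1, 0)
      = ∫ t in c..d, (g (b, t) - g (a, t)) :=
        integral_congr fun t _ => integral_eq_sub_of_hasDerivAt (fun s _ => hg_fst s t)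
          ((hg'_cont.comp (continuous_id.prodMk continuous_const)).intervalIntegrable _ _)
    _ = (Θ (b, d) - Θ (b, c)) - (Θ (a, d) - Θ (a, c)) := by
        rw [integral_sub ((hg_cont b).intervalIntegrable _ _) ((hg_cont a).intervalIntegrable _ _),
          integral_eq_sub_of_hasDerivAt (fun t _ => hΘ_snd b t) ((hg_cont b).intervalIntegrable _ _),
          integral_eq_sub_of_hasDerivAt (fun t _ => hΘ_snd a t) ((hg_cont a).intervalIntegrable _ _)]
    _ = Θ (b, d) - Θ (a, d) - Θ (b, c) + Θ (a, c) := by abel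

/-- If `Θ : ℝ² → ℝ` is `C²`, with values strictly between `0` and `π`, and
satisfies the sine-Gordon equation `∂²Θ/∂x¹∂x² = sin Θ`, then the integral of
`sin Θ` over `[-a,a] × [-a,a]` equals `Θ(a,a) - Θ(-a,a) - Θ(a,-a) + Θ(-a,-a)`,
and hence is strictly less than `2π`. -/
theorem sineGordon_integral_lt_two_pi
    (Θ : ℝ × ℝ → ℝ) (hΘ : ContDiff ℝ 2 Θ)
    (hrange : ∀ x : ℝ × ℝ, 0 < Θ x ∧ Θ x < π)
    (hpde : ∀ x : ℝ × ℝ,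
      deriv (fun s : ℝ => deriv (fun t : ℝ => Θ (s, t)) x.2) x.1 = Real.sin (Θ x)) :
    ∀ a : ℝ, 0 < a →
      (∫ x in Set.Icc (-a) a ×ˢ Set.Icc (-a) a, Real.sin (Θ x))
          = Θ (a, a) - Θ (-a, a) - Θ (a, -a) + Θ (-a, -a) ∧
      (∫ x in Set.Icc (-a) a ×ˢ Set.Icc (-a) a, Real.sin (Θ x)) < 2 * π := by
  intro a ha
  have hcorners := setIntegral_Icc_prod_Icc_deriv_deriv hΘ (neg_le_self ha.le) (neg_le_self ha.le)
  simp only [hpde] at hcorners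
  refine ⟨hcorners, ?_⟩
  rw [hcorners]
  linarith [hrange (a, a), hrange (-a, a), hrange (a, -a), hrange (-a, -a)]
end
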